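/- arXiv:1010.0009 — 8 statements merged into one kernel-verified Lean document; each statement's English description precedes it below -/
import Mathlib

section
/- For every integer n ≥ 1, every permutation π of {0,1}^n, and every s ∈ [0,1], the ground state energy satisfies E_π(s)/n ≤ e(s). -/
open scoped Classical

/-- Bit strings of length `n`. -/
abbrev BitStr (n : ℕ) := Fin n → Bool

/-- Hamming weight of a bit string. -/
def hamW {n : ℕ} (z : BitStr n) : ℕ := (Finset.univ.filter fun i => z i = true).card

/-- The adiabatic Hamiltonian `H_π(s)` for the scrambled Hamming-weight cost function:
diagonal entry `(1-s)·n/2 + s·W(π⁻¹ z)`, entry `-(1-s)/2` between strings differing in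
exactly one bit, and `0` otherwise. -/
noncomputable def Hpi (n : ℕ) (π : Equiv.Perm (BitStr n)) (s : ℝ) :
    Matrix (BitStr n) (BitStr n) ℝ :=
  Matrix.of fun z z' =>
    if z = z' then (1 - s) * n / 2 + s * hamW (π.symm z)
    else if (Finset.univ.filter fun i => z i ≠ z' i).card = 1 then -(1 - s) / 2
    else 0

/-- The eigenvalues of a (Hermitian) real symmetric matrix, sorted in nondecreasing
order and counted with multiplicity. Junk value `[]` if the matrix is not Hermitian. -/
noncomputable def sortedEigs {ι : Type*} [Fintype ι] [DecidableEq ι]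
    (A : Matrix ι ι ℝ) : List ℝ :=
  if h : A.IsHermitian then Multiset.sort (Finset.univ.val.map h.eigenvalues) (· ≤ ·)
  else []

/-- `E_π(s)`: the smallest eigenvalue of `H_π(s)`. -/
noncomputable def Epi (n : ℕ) (π : Equiv.Perm (BitStr n)) (s : ℝ) : ℝ :=
  (sortedEigs (Hpi n π s)).getD 0 0

/-- `E_{1,π}(s)`: the second-smallest eigenvalue of `H_π(s)`, counted with multiplicity. -/
noncomputable def E1pi (n : ℕ) (π : Equiv.Perm (BitStr n)) (s : ℝ) : ℝ :=
  (sortedEigs (Hpi n π s)).getD 1 0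

/-- The spectral gap `γ_π(s)`. -/
noncomputable def gapPi (n : ℕ) (π : Equiv.Perm (BitStr n)) (s : ℝ) : ℝ :=
  E1pi n π s - Epi n π s

/-- Probability of an event under a uniformly random permutation of `{0,1}^n`. -/
noncomputable def prPerm (n : ℕ) (P : Equiv.Perm (BitStr n) → Prop) : ℝ :=
  (Finset.univ.filter P).card / (Fintype.card (Equiv.Perm (BitStr n)))

/-- The asymptotic ground state energy density `e(s)`. -/
noncomputable def eFun (s : ℝ) : ℝ := if s ≤ 1/2 then s / 2 else (1 - s) / 2

/-!
`E_π(s)` is the minimum of the Rayleigh quotient of `H_π(s)`, so every test vector bounds it.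
The uniform vector has energy `s·n/2` whatever `π` is: each row of `H_π(s)` sums to
`s·W(π⁻¹ z)`, and the Hamming weight averages to `n/2`. The basis vector at `π(0…0)` has
energy `(1-s)·n/2`. Hence `E_π(s) ≤ n·min(s, 1-s)/2 = n·e(s)`.
-/

open Finset
open scoped Matrix MatrixOrder

theorem Matrix.IsHermitian.mul_dotProduct_self_le_of_le_eigenvalues {ι : Type*} [Fintype ι]
    [DecidableEq ι] {A : Matrix ι ι ℝ} (hA : A.IsHermitian) {c : ℝ}
    (hc : ∀ i, c ≤ hA.eigenvalues i) (v : ι → ℝ) :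
    c * (v ⬝ᵥ v) ≤ v ⬝ᵥ (A *ᵥ v) := by
  have hle : algebraMap ℝ _ c ≤ A := by
    rw [algebraMap_le_iff_le_spectrum hA.isSelfAdjoint, hA.spectrum_real_eq_range_eigenvalues]
    rintro _ ⟨i, rfl⟩
    exact hc i
  simpa [Matrix.sub_mulVec, Algebra.algebraMap_eq_smul_one, Matrix.smul_mulVec, dotProduct_sub,
    dotProduct_smul] using (Matrix.le_iff.mp hle).dotProduct_mulVec_nonneg v

theorem sortedEigs_getD_zero_le_eigenvalues {ι : Type*} [Fintype ι] [DecidableEq ι]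
    {A : Matrix ι ι ℝ} (hA : A.IsHermitian) (i : ι) :
    (sortedEigs A).getD 0 0 ≤ hA.eigenvalues i := by
  have hmem : hA.eigenvalues i ∈ sortedEigs A := by
    rw [sortedEigs, dif_pos hA, Multiset.mem_sort]
    exact Multiset.mem_map_of_mem _ (mem_univ i)
  have hsorted : (sortedEigs A).Pairwise (· ≤ ·) := by
    rw [sortedEigs, dif_pos hA]
    exact Multiset.pairwise_sort _ _
  have hhead : (sortedEigs A).getD 0 0 = (sortedEigs A).head! := by
    cases sortedEigs A <;> rfl
  exact hhead ▸ hsorted.head!_le hmem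

theorem sortedEigs_getD_zero_mul_dotProduct_self_le {ι : Type*} [Fintype ι] [DecidableEq ι]
    {A : Matrix ι ι ℝ} (hA : A.IsHermitian) (v : ι → ℝ) :
    (sortedEigs A).getD 0 0 * (v ⬝ᵥ v) ≤ v ⬝ᵥ (A *ᵥ v) :=
  hA.mul_dotProduct_self_le_of_le_eigenvalues (sortedEigs_getD_zero_le_eigenvalues hA) v

theorem hamW_add_hamW_not {n : ℕ} (z : BitStr n) : hamW z + hamW (fun i => !z i) = n := by
  simpa [hamW] using card_filter_add_card_filter_not (s := univ) (fun i => z i = true)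

theorem two_mul_sum_hamW (n : ℕ) : 2 * ∑ z : BitStr n, (hamW z : ℝ) = n * 2 ^ n := by
  calc 2 * ∑ z : BitStr n, (hamW z : ℝ)
      = ∑ z : BitStr n, ((hamW z : ℝ) + hamW (fun i => !z i)) := by
        rw [two_mul, sum_add_distrib,
          ← Equiv.sum_comp (Equiv.piCongrRight fun _ => Equiv.boolNot) (fun z => (hamW z : ℝ))]
        rfl
    _ = n * 2 ^ n := by
        simp only [← Nat.cast_add, hamW_add_hamW_not, sum_const, card_univ, Fintype.card_fun,
          Fintype.card_fin, Fintype.card_bool, nsmul_eq_mul]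
        push_cast
        ring

theorem hammingDist_update_not {n : ℕ} (z : BitStr n) (i : Fin n) :
    hammingDist z (Function.update z i (!z i)) = 1 := by
  refine card_eq_one.mpr ⟨i, ?_⟩
  ext j
  by_cases h : j = i
  · subst h; simp
  · simp [h]

theorem card_hammingDist_eq_one {n : ℕ} (z : BitStr n) :
    #{z' : BitStr n | hammingDist z z' = 1} = n := by
  have hflip : Function.Injective fun i => Function.update z i (!z i) := by
    intro i j hij
    by_contra hne
    simpa [Function.update_of_ne hne] using congrFun hij i
  suffices ({z' | hammingDist z z' = 1} : Finset (BitStr n)) =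
      univ.image fun i => Function.update z i (!z i) by
    rw [this, card_image_of_injective _ hflip, card_univ, Fintype.card_fin]
  ext z'
  simp only [mem_filter, mem_univ, true_and, mem_image]
  constructor
  · intro h
    obtain ⟨i, hi⟩ := card_eq_one.mp h
    refine ⟨i, funext fun j => ?_⟩
    have hj : z j ≠ z' j ↔ j = i := by simpa using congrArg (j ∈ ·) hi
    by_cases h : j = i
    · subst h
      have hne : z j ≠ z' j := hj.mpr rfl
      revert hne
      cases z j <;> cases z' j <;> simp
    · simpa [h] using hj
  · rintro ⟨i, rfl⟩
    exact hammingDist_update_not z i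

theorem Hpi_apply {n : ℕ} (π : Equiv.Perm (BitStr n)) (s : ℝ) (z z' : BitStr n) :
    Hpi n π s z z' = (if z = z' then (1 - s) * n / 2 + s * hamW (π.symm z) else 0) +
      if hammingDist z z' = 1 then -(1 - s) / 2 else 0 := by
  by_cases h : z = z'
  · subst h; simp [Hpi]
  · simp [Hpi, h, hammingDist]

theorem Hpi_isHermitian (n : ℕ) (π : Equiv.Perm (BitStr n)) (s : ℝ) :
    (Hpi n π s).IsHermitian :=
  Matrix.IsHermitian.ext fun z z' => by
    by_cases h : z = z'
    · subst h; rfl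
    · simp [Hpi_apply, h, Ne.symm h, hammingDist_comm]

theorem sum_Hpi_row {n : ℕ} (π : Equiv.Perm (BitStr n)) (s : ℝ) (z : BitStr n) :
    ∑ z', Hpi n π s z z' = s * hamW (π.symm z) := by
  simp only [Hpi_apply, sum_add_distrib, sum_ite_eq, mem_univ, if_true, sum_ite, sum_const_zero,
    sum_const, card_hammingDist_eq_one, nsmul_eq_mul]
  ring

theorem Epi_mul_dotProduct_self_le {n : ℕ} (π : Equiv.Perm (BitStr n)) (s : ℝ)
    (v : BitStr n → ℝ) :
    Epi n π s * (v ⬝ᵥ v) ≤ v ⬝ᵥ (Hpi n π s *ᵥ v) :=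
  sortedEigs_getD_zero_mul_dotProduct_self_le (Hpi_isHermitian n π s) v

theorem Epi_le_mul_half {n : ℕ} (π : Equiv.Perm (BitStr n)) (s : ℝ) :
    Epi n π s ≤ s * n / 2 := by
  have h := Epi_mul_dotProduct_self_le π s 1
  have hones : (1 : BitStr n → ℝ) ⬝ᵥ 1 = 2 ^ n := by simp
  have hquad : (1 : BitStr n → ℝ) ⬝ᵥ (Hpi n π s *ᵥ 1) = s * n / 2 * 2 ^ n :=
    calc (1 : BitStr n → ℝ) ⬝ᵥ (Hpi n π s *ᵥ 1) = ∑ z, s * hamW (π.symm z) := by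
          simp [dotProduct, Matrix.mulVec, sum_Hpi_row]
      _ = s * ∑ z, (hamW z : ℝ) := by
          rw [← mul_sum, Equiv.sum_comp π.symm fun z => (hamW z : ℝ)]
      _ = s * n / 2 * 2 ^ n := by linear_combination s / 2 * two_mul_sum_hamW n
  rw [hones, hquad] at h
  exact le_of_mul_le_mul_right h (by positivity)

theorem Epi_le_one_sub_mul_half {n : ℕ} (π : Equiv.Perm (BitStr n)) (s : ℝ) :
    Epi n π s ≤ (1 - s) * n / 2 := by
  have h := Epi_mul_dotProduct_self_le π s (Pi.single (π fun _ => false) 1)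
  simpa [Hpi_apply, hamW] using h

theorem stmt0_general (n : ℕ) (hn : 1 ≤ n) (π : Equiv.Perm (BitStr n))
    (s : ℝ) :
    Epi n π s / n ≤ eFun s := by
  rw [div_le_iff₀ (by exact_mod_cast hn), eFun]
  split_ifs
  · linarith [Epi_le_mul_half π s]
  · linarith [Epi_le_one_sub_mul_half π s]

/-- For every `n ≥ 1`, every permutation `π` of `{0,1}^n`, and every `s ∈ [0,1]`,
the ground state energy satisfies `E_π(s)/n ≤ e(s)`. -/
theorem stmt0 (n : ℕ) (hn : 1 ≤ n) (π : Equiv.Perm (BitStr n))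
    (s : ℝ) (hs : s ∈ Set.Icc (0 : ℝ) 1) :
    Epi n π s / n ≤ eFun s :=
  stmt0_general n hn π s
end

section
/- Let H be an N × N Hermitian matrix over ℂ (indexed by a finite nonempty set) that is stoquastic in the standard basis, i.e. every off-diagonal entry H_{z z'} (z ≠ z') is real and nonpositive. Let E_g be the smallest eigenvalue of H. Then for every vector φ with φ(z) > 0 for all z, E_g ≥ min over z of (Hφ)(z) / φ(z). -/
open scoped ComplexOrder Matrix

/-!
Let `ψ` be an eigenvector for the smallest eigenvalue `E`, rescaled by a complex number so that
`|ψ| ≤ φ` everywhere with equality `ψ z₀ = φ z₀` at some coordinate (possible since `φ > 0`).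
Comparing row `z₀` of `Hφ` and `Hψ` term by term: the diagonal terms agree, and off the diagonal
`H z₀ z ≤ 0` while `Re ψ z ≤ φ z`. Hence `Re (Hφ)(z₀) ≤ Re (Hψ)(z₀) = E φ(z₀)`.
-/

def Matrix.IsStoquastic {ι : Type*} (H : Matrix ι ι ℂ) : Prop :=
  ∀ z z', z ≠ z' → H z z' ≤ 0

lemma Complex.re_mul_le_re_mul_of_nonpos {a w x : ℂ} (ha : a ≤ 0) (h : w.re ≤ x.re) :
    (a * x).re ≤ (a * w).re := by
  obtain ⟨ha_re, ha_im⟩ := Complex.le_def.mp ha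
  simp only [Complex.zero_re, Complex.zero_im] at ha_re ha_im
  simp only [Complex.mul_re, ha_im, zero_mul, sub_zero]
  exact mul_le_mul_of_nonpos_left h ha_re

lemma exists_mul_eq_and_norm_mul_le {ι : Type*} [Fintype ι] {f : ι → ℝ}
    (hf : ∀ z, 0 < f z) {ψ : ι → ℂ} (hψ : ψ ≠ 0) :
    ∃ (c : ℂ) (z₀ : ι), c * ψ z₀ = f z₀ ∧ ∀ z, ‖c * ψ z‖ ≤ f z := by
  obtain ⟨z₁, hz₁⟩ := Function.ne_iff.mp hψ
  obtain ⟨z₀, -, hmax⟩ :=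
    Finset.univ.exists_max_image (fun z => ‖ψ z‖ / f z) ⟨z₁, Finset.mem_univ _⟩
  have hψz₀ : ψ z₀ ≠ 0 := by
    have hpos : 0 < ‖ψ z₁‖ / f z₁ := div_pos (norm_pos_iff.mpr hz₁) (hf z₁)
    intro h
    simpa [h] using hpos.trans_le (hmax z₁ (Finset.mem_univ _))
  refine ⟨f z₀ / ψ z₀, z₀, div_mul_cancel₀ _ hψz₀, fun z => ?_⟩
  have hratio := hmax z (Finset.mem_univ _)
  rw [div_le_div_iff₀ (hf z) (hf z₀)] at hratio
  rw [norm_mul, norm_div, Complex.norm_of_nonneg (hf z₀).le, div_mul_eq_mul_div,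
    div_le_iff₀ (norm_pos_iff.mpr hψz₀)]
  linarith

namespace Matrix.IsStoquastic

variable {ι : Type*} [Fintype ι] {H : Matrix ι ι ℂ}

lemma re_mulVec_le (hH : H.IsStoquastic) {φ ψ : ι → ℂ} {z₀ : ι}
    (hre : ∀ z, (ψ z).re ≤ (φ z).re) (hz₀ : ψ z₀ = φ z₀) :
    ((H *ᵥ φ) z₀).re ≤ ((H *ᵥ ψ) z₀).re := by
  simp only [mulVec, dotProduct, Complex.re_sum]
  refine Finset.sum_le_sum fun z _ => ?_
  rcases eq_or_ne z₀ z with rfl | hz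
  · rw [hz₀]
  · exact Complex.re_mul_le_re_mul_of_nonpos (hH z₀ z hz) (hre z)

lemma exists_re_mulVec_div_le (hH : H.IsStoquastic) {φ : ι → ℂ}
    (hφ : ∀ z, 0 < φ z) {ψ : ι → ℂ} (hψ : ψ ≠ 0) {E : ℂ} (hE : H *ᵥ ψ = E • ψ) :
    ∃ z, ((H *ᵥ φ) z / φ z).re ≤ E.re := by
  set f : ι → ℝ := fun z => (φ z).re
  have hφf : ∀ z, φ z = f z := fun z => Complex.eq_re_of_ofReal_le (hφ z).le
  have hf : ∀ z, 0 < f z := fun z => by simpa [hφf z] using hφ z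
  obtain ⟨c, z₀, hz₀, hle⟩ := exists_mul_eq_and_norm_mul_le hf hψ
  have hcψ : ((H *ᵥ φ) z₀).re ≤ E.re * f z₀ := calc
    ((H *ᵥ φ) z₀).re ≤ ((H *ᵥ (c • ψ)) z₀).re :=
      hH.re_mulVec_le (fun z => (Complex.re_le_norm _).trans ((hle z).trans_eq (by simp [hφf])))
        (by simp [hz₀, hφf])
    _ = E.re * f z₀ := by
      rw [mulVec_smul, hE, smul_comm, Pi.smul_apply, Pi.smul_apply, smul_eq_mul, smul_eq_mul,
        hz₀, Complex.re_mul_ofReal]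
  refine ⟨z₀, ?_⟩
  rw [hφf, Complex.div_ofReal_re, div_le_iff₀ (hf z₀)]
  exact hcψ

end Matrix.IsStoquastic

/-- Collatz–Wielandt lower bound for the ground state energy of a stoquastic Hamiltonian:
if `H` is Hermitian with all off-diagonal entries real and nonpositive, and `φ` has
strictly positive entries, then the smallest eigenvalue `E_g` of `H` satisfies
`E_g ≥ min_z (Hφ)(z)/φ(z)`. -/
theorem stmt6 {ι : Type*} [Fintype ι] [DecidableEq ι] [Nonempty ι]
    (H : Matrix ι ι ℂ) (hH : H.IsHermitian)
    (hsto : ∀ z z', z ≠ z' → H z z' ≤ 0)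
    (φ : ι → ℂ) (hφ : ∀ z, 0 < φ z) :
    Finset.univ.inf' Finset.univ_nonempty (fun z => ((H.mulVec φ) z / φ z).re) ≤
      Finset.univ.inf' Finset.univ_nonempty hH.eigenvalues := by
  obtain ⟨i₀, -, hi₀⟩ := Finset.exists_mem_eq_inf' Finset.univ_nonempty hH.eigenvalues
  have hψ : ⇑(hH.eigenvectorBasis i₀) ≠ 0 := by
    simpa using hH.eigenvectorBasis.orthonormal.ne_zero i₀
  have hE : H *ᵥ ⇑(hH.eigenvectorBasis i₀) =
      (hH.eigenvalues i₀ : ℂ) • ⇑(hH.eigenvectorBasis i₀) := by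
    rw [hH.mulVec_eigenvectorBasis, Complex.coe_smul]
  obtain ⟨z, hz⟩ := Matrix.IsStoquastic.exists_re_mulVec_div_le hsto hφ hψ hE
  rw [hi₀]
  exact (Finset.inf'_le _ (Finset.mem_univ z)).trans (by simpa using hz)
end

section
/- Let H be an N × N Hermitian matrix over ℂ (indexed by a finite nonempty set) whose off-diagonal entries are all real and nonpositive. Suppose Hψ = Eψ for a real number E and a vector ψ with ψ(z) > 0 for all z. Then E equals the smallest eigenvalue of H. -/
/-!
Conjugating by `diagonal ψ` turns `H` into a matrix with the same spectrum, nonpositive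
off-diagonal entries and every row sum equal to `E`. Its Gershgorin disc around a diagonal
entry `a` then has radius `re a - E`, so every eigenvalue has real part at least `E`; and `E`
is itself an eigenvalue, with eigenvector `ψ`.
-/

open scoped ComplexOrder
open Matrix Module.End Finset

section

variable {ι 𝕜 : Type*} [Fintype ι] [DecidableEq ι] [RCLike 𝕜]

theorem Matrix.spectrum_diagonal_inv_mul_mul_diagonal {K : Type*} [Field K] (A : Matrix ι ι K)
    {d : ι → K} (hd : ∀ i, d i ≠ 0) :
    spectrum K (diagonal d⁻¹ * A * diagonal d) = spectrum K A := by
  have hright : diagonal d * diagonal d⁻¹ = 1 := by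
    rw [diagonal_mul_diagonal, ← diagonal_one]
    exact congrArg diagonal (funext fun i => mul_inv_cancel₀ (hd i))
  have hleft : diagonal d⁻¹ * diagonal d = 1 := by
    rw [diagonal_mul_diagonal, ← diagonal_one]
    exact congrArg diagonal (funext fun i => inv_mul_cancel₀ (hd i))
  exact spectrum.units_conjugate' (u := ⟨diagonal d, diagonal d⁻¹, hright, hleft⟩)

theorem RCLike.norm_eq_neg_re_of_nonpos {z : 𝕜} (hz : z ≤ 0) : ‖z‖ = -RCLike.re z := by
  have h := congrArg RCLike.re (RCLike.norm_of_nonneg' (neg_nonneg.2 hz))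
  rwa [RCLike.ofReal_re, norm_neg, map_neg] at h

theorem Matrix.le_re_of_hasEigenvalue_of_offDiag_nonpos_of_sum_row_eq (A : Matrix ι ι 𝕜)
    (hA : ∀ i j, i ≠ j → A i j ≤ 0) {E : ℝ} (hrow : ∀ i, ∑ j, A i j = E) {μ : 𝕜}
    (hμ : HasEigenvalue (toLin' A) μ) : E ≤ RCLike.re μ := by
  obtain ⟨k, hk⟩ := eigenvalue_mem_ball hμ
  have hradius : ∑ j ∈ univ.erase k, ‖A k j‖ = RCLike.re (A k k) - E := by
    have hrow_re := congrArg RCLike.re (hrow k)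
    rw [← add_sum_erase _ _ (mem_univ k), map_add, map_sum, RCLike.ofReal_re] at hrow_re
    rw [← hrow_re, sum_congr rfl fun j hj =>
      RCLike.norm_eq_neg_re_of_nonpos (hA k j (ne_of_mem_erase hj).symm), sum_neg_distrib]
    ring
  rw [Metric.mem_closedBall, dist_eq_norm, hradius] at hk
  have hre := RCLike.re_le_norm (A k k - μ)
  rw [← norm_neg, neg_sub, map_sub] at hre
  linarith

theorem Matrix.le_re_of_hasEigenvalue_of_pos_eigenvector (H : Matrix ι ι 𝕜)
    (hH : ∀ i j, i ≠ j → H i j ≤ 0) {ψ : ι → 𝕜} (hψ : ∀ i, 0 < ψ i) {E : ℝ}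
    (heig : H *ᵥ ψ = (E : 𝕜) • ψ) {μ : 𝕜} (hμ : HasEigenvalue (toLin' H) μ) :
    E ≤ RCLike.re μ := by
  set B := diagonal ψ⁻¹ * H * diagonal ψ
  have hB (i j : ι) : B i j = (ψ i)⁻¹ * H i j * ψ j := by
    simp [B, mul_diagonal, diagonal_mul]
  refine B.le_re_of_hasEigenvalue_of_offDiag_nonpos_of_sum_row_eq (fun i j hij => ?_)
    (fun i => ?_) ?_
  · rw [hB]
    exact mul_nonpos_of_nonpos_of_nonneg
      (mul_nonpos_of_nonneg_of_nonpos (inv_pos.2 (hψ i)).le (hH i j hij)) (hψ j).le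
  · calc ∑ j, B i j = (ψ i)⁻¹ * (H *ᵥ ψ) i := by
          simp only [hB, mulVec, dotProduct, mul_sum, mul_assoc]
      _ = E := by
          rw [heig, Pi.smul_apply, smul_eq_mul, mul_left_comm, inv_mul_cancel₀ (hψ i).ne',
            mul_one]
  · rwa [hasEigenvalue_iff_mem_spectrum, spectrum_toLin',
      spectrum_diagonal_inv_mul_mul_diagonal H fun i => (hψ i).ne', ← spectrum_toLin',
      ← hasEigenvalue_iff_mem_spectrum]

end

/-- Perron–Frobenius-type lemma: if `H` is Hermitian with all off-diagonal entries real
and nonpositive, and `Hψ = Eψ` for a vector `ψ` with strictly positive entries, then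
`E` is the smallest eigenvalue of `H`. -/
theorem stmt7 {ι : Type*} [Fintype ι] [DecidableEq ι] [Nonempty ι]
    (H : Matrix ι ι ℂ) (hH : H.IsHermitian)
    (hsto : ∀ z z', z ≠ z' → H z z' ≤ 0)
    (E : ℝ) (ψ : ι → ℂ) (hψ : ∀ z, 0 < ψ z)
    (heig : H.mulVec ψ = (E : ℂ) • ψ) :
    E = Finset.univ.inf' Finset.univ_nonempty hH.eigenvalues := by
  have hspec (μ : ℂ) :
      HasEigenvalue (toLin' H) μ ↔ μ ∈ RCLike.ofReal '' Set.range hH.eigenvalues := by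
    rw [hasEigenvalue_iff_mem_spectrum, spectrum_toLin', hH.spectrum_eq_image_range]
  have hE : HasEigenvalue (toLin' H) E := hasEigenvalue_of_hasEigenvector
    ⟨mem_eigenspace_iff.2 (by simpa using heig),
      fun hψ0 => (hψ (Classical.arbitrary ι)).ne' (congrFun hψ0 _)⟩
  obtain ⟨_, ⟨i, rfl⟩, hi⟩ := (hspec E).1 hE
  refine le_antisymm (le_inf' _ _ fun j _ => ?_) ?_
  · simpa using H.le_re_of_hasEigenvalue_of_pos_eigenvector hsto hψ heig
      ((hspec _).2 ⟨_, ⟨j, rfl⟩, rfl⟩)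
  · rw [← RCLike.ofReal_injective hi]
    exact inf'_le _ (mem_univ i)
end

section
/- Let H be an N × N Hermitian matrix over ℂ whose off-diagonal entries are all real and nonpositive, and let ψ be a vector with real entries. Define ψ' by ψ'(z) = |ψ(z)| for every z. Then ⟨ψ'|H|ψ'⟩ ≤ ⟨ψ|H|ψ⟩. -/
open scoped ComplexOrder

/-- For a Hermitian matrix `H` with real nonpositive off-diagonal entries and a real
vector `ψ`, replacing the entries of `ψ` by their absolute values does not increase the
quadratic form: `⟨ψ'|H|ψ'⟩ ≤ ⟨ψ|H|ψ⟩` where `ψ'(z) = |ψ(z)|`. -/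
theorem stmt8 {ι : Type*} [Fintype ι]
    (H : Matrix ι ι ℂ) (hH : H.IsHermitian)
    (hsto : ∀ z z', z ≠ z' → H z z' ≤ 0)
    (ψ : ι → ℝ) :
    ∑ z, ∑ z', ((|ψ z| : ℝ) : ℂ) * H z z' * ((|ψ z'| : ℝ) : ℂ) ≤
      ∑ z, ∑ z', ((ψ z : ℝ) : ℂ) * H z z' * ((ψ z' : ℝ) : ℂ) := by
  refine Finset.sum_le_sum fun z _ => Finset.sum_le_sum fun z' _ => ?_
  by_cases h : z = z'
  · subst h
    apply le_of_eq
    have : ((|ψ z| : ℝ) : ℂ) * ((|ψ z| : ℝ) : ℂ) = ((ψ z : ℝ) : ℂ) * ((ψ z : ℝ) : ℂ) := by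
      push_cast
      exact_mod_cast congrArg (Complex.ofReal) (abs_mul_abs_self (ψ z))
    calc ((|ψ z| : ℝ) : ℂ) * H z z * ((|ψ z| : ℝ) : ℂ)
        = ((|ψ z| : ℝ) : ℂ) * ((|ψ z| : ℝ) : ℂ) * H z z := by ring
      _ = ((ψ z : ℝ) : ℂ) * ((ψ z : ℝ) : ℂ) * H z z := by rw [this]
      _ = ((ψ z : ℝ) : ℂ) * H z z * ((ψ z : ℝ) : ℂ) := by ring
  · have hle := hsto z z' h
    rw [Complex.le_def] at hle
    have him : (H z z').im = 0 := hle.2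
    have hre : (H z z').re ≤ 0 := by simpa using hle.1
    have hH' : H z z' = (((H z z').re : ℝ) : ℂ) := by
      apply Complex.ext <;> simp [him]
    rw [hH']
    set c := (H z z').re
    have : ((|ψ z| * c * |ψ z'| : ℝ) : ℂ) ≤ ((ψ z * c * ψ z' : ℝ) : ℂ) := by
      rw [Complex.real_le_real]
      nlinarith [le_abs_self (ψ z * ψ z'), abs_mul (ψ z) (ψ z'), hre,
        abs_nonneg (ψ z), abs_nonneg (ψ z')]
    calc ((|ψ z| : ℝ) : ℂ) * ((c : ℝ) : ℂ) * ((|ψ z'| : ℝ) : ℂ)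
        = ((|ψ z| * c * |ψ z'| : ℝ) : ℂ) := by push_cast; ring
      _ ≤ ((ψ z * c * ψ z' : ℝ) : ℂ) := this
      _ = ((ψ z : ℝ) : ℂ) * ((c : ℝ) : ℂ) * ((ψ z' : ℝ) : ℂ) := by push_cast; ring
end

section
/- Let H be an N × N Hermitian matrix over ℂ, indexed by a finite set Z with |Z| ≥ 2, whose off-diagonal entries are all real and nonpositive. Fix z₀ ∈ Z and let χ be a vector with χ(z₀) = 0 and χ(z) > 0 for all z ≠ z₀. Then the second-smallest eigenvalue E_1 of H (counted with multiplicity) satisfies E_1 ≥ min over z ≠ z₀ of (Hχ)(z) / χ(z). -/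
open scoped ComplexOrder

/-- The eigenvalues of a Hermitian complex matrix, sorted in nondecreasing order and
counted with multiplicity. Junk value `[]` if the matrix is not Hermitian. -/
noncomputable def sortedEigsC {ι : Type*} [Fintype ι] [DecidableEq ι]
    (A : Matrix ι ι ℂ) : List ℝ :=
  if h : A.IsHermitian then Multiset.sort (Finset.univ.val.map h.eigenvalues) (· ≤ ·)
  else []

/-!
Write `H` as a real symmetric matrix `A` and `χ` as a real vector `φ ≥ 0`, and let `c` be the
minimum of `(Aφ) z / φ z` over `z ≠ z₀`. A vector `ψ` vanishing at `z₀` is supported where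
`φ > 0`, so `ψ = f φ` for some `f`, and the ground-state substitution gives
`⟨ψ, Hψ⟩ = ∑ z, |f z|² φ z (Aφ) z - ½ ∑ z w, A z w φ z φ w |f z - f w|²`.
The first sum is at least `c ‖ψ‖²`, and the double sum is nonpositive because the
off-diagonal entries of `A` are. Hence the quadratic form of `H` is at least `c` on the
hyperplane `ψ z₀ = 0`. That hyperplane meets the span of the eigenvectors with eigenvalue
below `c` trivially, so by counting dimensions at most one eigenvalue lies below `c`.
-/

section

open Matrix Module
open scoped InnerProductSpace

variable {ι : Type*}

theorem Matrix.IsHermitian.exists_isSymm_map_ofReal_eq {H : Matrix ι ι ℂ} (hH : H.IsHermitian)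
    (hreal : ∀ z w, z ≠ w → (H z w).im = 0) : ∃ A : Matrix ι ι ℝ, A.IsSymm ∧ A.map (↑) = H := by
  refine ⟨H.map Complex.re, IsSymm.ext fun z w => ?_, Matrix.ext fun z w => ?_⟩
  · simp [← hH.apply z w]
  · obtain rfl | h := eq_or_ne z w
    · exact hH.coe_re_apply_self z
    · exact Complex.ext rfl (hreal z w h).symm

variable [Fintype ι]

section
variable {𝕜 E : Type*} [RCLike 𝕜] [NormedAddCommGroup E] [InnerProductSpace 𝕜 E]
  {T : E →ₗ[𝕜] E} (b : OrthonormalBasis ι 𝕜 E) {μ : ι → ℝ}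

theorem LinearMap.IsSymmetric.re_inner_map_self_eq_sum (hT : T.IsSymmetric)
    (hb : ∀ i, T (b i) = (μ i : 𝕜) • b i) (x : E) :
    RCLike.re ⟪x, T x⟫_𝕜 = ∑ i, μ i * ‖⟪b i, x⟫_𝕜‖ ^ 2 := by
  rw [← b.sum_inner_mul_inner, map_sum]
  refine Finset.sum_congr rfl fun i _ => ?_
  rw [← hT, hb, inner_smul_left, RCLike.conj_ofReal, ← inner_conj_symm x, mul_left_comm,
    RCLike.conj_mul, ← RCLike.ofReal_pow, ← RCLike.ofReal_mul, RCLike.ofReal_re]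

theorem LinearMap.IsSymmetric.finrank_le_card_of_le_re_inner_map_self (hT : T.IsSymmetric)
    (hb : ∀ i, T (b i) = (μ i : 𝕜) • b i) {c : ℝ} {W : Submodule 𝕜 E}
    (hW : ∀ x ∈ W, c * ‖x‖ ^ 2 ≤ RCLike.re ⟪x, T x⟫_𝕜) :
    finrank 𝕜 W ≤ Fintype.card {i // c ≤ μ i} := by
  let P : W →ₗ[𝕜] {i // c ≤ μ i} → 𝕜 :=
    LinearMap.pi (fun i => innerₛₗ 𝕜 (b i)) ∘ₗ W.subtype
  suffices hP : Function.Injective P by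
    simpa using LinearMap.finrank_le_finrank_of_injective hP
  rw [← LinearMap.ker_eq_bot, Submodule.eq_bot_iff]
  intro x hx
  have hcoord : ∀ i, c ≤ μ i → ⟪b i, (x : E)⟫_𝕜 = 0 := fun i hi => congrFun hx ⟨i, hi⟩
  have hterm : ∀ i, (μ i - c) * ‖⟪b i, (x : E)⟫_𝕜‖ ^ 2 ≤ 0 := fun i => by
    obtain hi | hi := le_or_gt c (μ i)
    · simp [hcoord i hi]
    · exact mul_nonpos_of_nonpos_of_nonneg (by linarith) (sq_nonneg _)
  have hsum : ∑ i, (μ i - c) * ‖⟪b i, (x : E)⟫_𝕜‖ ^ 2 = 0 := by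
    refine le_antisymm (Finset.sum_nonpos fun i _ => hterm i) ?_
    have := hW x x.2
    rw [hT.re_inner_map_self_eq_sum b hb, ← b.sum_sq_norm_inner_right, Finset.mul_sum] at this
    simp only [sub_mul, Finset.sum_sub_distrib]
    linarith
  have hzero : ∀ i, ⟪b i, (x : E)⟫_𝕜 = 0 := fun i => by
    obtain hi | hi := le_or_gt c (μ i)
    · exact hcoord i hi
    · have := (Finset.sum_eq_zero_iff_of_nonpos fun i _ => hterm i).1 hsum i (Finset.mem_univ i)
      simpa [sub_ne_zero.2 hi.ne] using this
  have hnorm : ‖(x : E)‖ ^ 2 = 0 := by simp [← b.sum_sq_norm_inner_right, hzero]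
  simpa using hnorm

end

theorem Multiset.le_getD_one_sort {α : Type*} [LinearOrder α] {s : Multiset α}
    (hs : 2 ≤ Multiset.card s) {c : α} (h : s.countP (· < c) ≤ 1) (d : α) :
    c ≤ (s.sort (· ≤ ·)).getD 1 d := by
  rw [← Multiset.sort_eq s (· ≤ ·), Multiset.coe_countP] at h
  rw [← Multiset.length_sort (· ≤ ·)] at hs
  have hsorted := Multiset.pairwise_sort s (· ≤ ·)
  match s.sort (· ≤ ·), hs, hsorted, h with
  | a :: b :: t, _, hsorted, h =>
    by_contra! hb
    change b < c at hb
    have ha : a < c := ((List.pairwise_cons.mp hsorted).1 b (by simp)).trans_lt hb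
    simp [ha, hb] at h

theorem Matrix.IsHermitian.le_sortedEigsC_getD_one [DecidableEq ι] {H : Matrix ι ι ℂ}
    (hH : H.IsHermitian) (hcard : 2 ≤ Fintype.card ι) {c : ℝ} (z₀ : ι)
    (hc : ∀ ψ : ι → ℂ, ψ z₀ = 0 → c * ∑ z, ‖ψ z‖ ^ 2 ≤ (star ψ ⬝ᵥ H *ᵥ ψ).re) :
    c ≤ (sortedEigsC H).getD 1 0 := by
  set W := LinearMap.ker (EuclideanSpace.projₗ (𝕜 := ℂ) z₀)
  have hproj : EuclideanSpace.projₗ (𝕜 := ℂ) z₀ ≠ 0 := fun h => by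
    simpa using LinearMap.congr_fun h (EuclideanSpace.single z₀ 1)
  have hW : finrank ℂ W + 1 = Fintype.card ι :=
    (Module.Dual.finrank_ker_add_one_of_ne_zero hproj).trans finrank_euclideanSpace
  have hB : ∀ i, toEuclideanLin H (hH.eigenvectorBasis i)
      = (hH.eigenvalues i : ℂ) • hH.eigenvectorBasis i := fun i => by
    apply WithLp.ofLp_injective
    rw [ofLp_toLpLin, toLin'_apply, hH.mulVec_eigenvectorBasis, WithLp.ofLp_smul,
      RCLike.real_smul_eq_coe_smul (K := ℂ)]
    rfl
  have hle := LinearMap.IsSymmetric.finrank_le_card_of_le_re_inner_map_self hH.eigenvectorBasis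
    (isSymmetric_toEuclideanLin_iff.mpr hH) (μ := hH.eigenvalues) hB (W := W) fun x hx => by
      rw [EuclideanSpace.norm_sq_eq, EuclideanSpace.inner_eq_star_dotProduct, dotProduct_comm]
      exact hc _ hx
  have hlt : (Finset.univ.filter fun i => hH.eigenvalues i < c).card ≤ 1 := by
    have := Finset.card_filter_add_card_filter_not (s := Finset.univ) fun i => c ≤ hH.eigenvalues i
    simp only [Fintype.card_subtype, not_le, Finset.card_univ] at hle this
    omega
  rw [sortedEigsC, dif_pos hH]
  refine Multiset.le_getD_one_sort (by simpa using hcard) ?_ 0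
  rwa [Multiset.countP_map]

theorem sum_sum_mul_norm_sub_sq {g : ι → ι → ℝ} (hg : ∀ z w, g z w = g w z) (f : ι → ℂ) :
    ∑ z, ∑ w, g z w * ‖f z - f w‖ ^ 2
      = 2 * ∑ z, ‖f z‖ ^ 2 * ∑ w, g z w
        - 2 * ∑ z, ∑ w, g z w * (starRingEnd ℂ (f z) * f w).re := by
  have hnorm : ∀ z w,
      ‖f z - f w‖ ^ 2 = ‖f z‖ ^ 2 + ‖f w‖ ^ 2 - 2 * (starRingEnd ℂ (f z) * f w).re := by
    intro z w
    rw [Complex.sq_norm, Complex.sq_norm, Complex.sq_norm, Complex.normSq_sub,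
      ← Complex.conj_re, map_mul, Complex.conj_conj]
  have hswap : ∑ z, ∑ w, g z w * ‖f w‖ ^ 2 = ∑ z, ∑ w, g z w * ‖f z‖ ^ 2 := by
    rw [Finset.sum_comm]
    simp only [hg]
  have hrow : ∀ z, ∑ w, g z w * ‖f z‖ ^ 2 = ‖f z‖ ^ 2 * ∑ w, g z w := fun z => by
    rw [Finset.mul_sum]
    simp only [mul_comm]
  calc ∑ z, ∑ w, g z w * ‖f z - f w‖ ^ 2
      = ∑ z, ∑ w, (g z w * ‖f z‖ ^ 2 + g z w * ‖f w‖ ^ 2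
          - 2 * (g z w * (starRingEnd ℂ (f z) * f w).re)) :=
        Finset.sum_congr rfl fun z _ => Finset.sum_congr rfl fun w _ => by rw [hnorm]; ring
    _ = _ := by
        simp only [Finset.sum_add_distrib, Finset.sum_sub_distrib, ← Finset.mul_sum, hswap, hrow]
        ring

theorem Matrix.IsSymm.mul_sum_norm_sq_le_re_star_dotProduct_mulVec
    {A : Matrix ι ι ℝ} (hA : A.IsSymm) (hoff : ∀ z w, z ≠ w → A z w ≤ 0)
    {φ : ι → ℝ} (hφ : 0 ≤ φ) {c : ℝ} (hc : ∀ z, 0 < φ z → c * φ z ≤ (A *ᵥ φ) z)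
    {u : ι → ℂ} (hu : ∀ z, φ z = 0 → u z = 0) :
    c * ∑ z, ‖u z‖ ^ 2 ≤ (star u ⬝ᵥ A.map (↑) *ᵥ u).re := by
  -- where `φ z = 0` the quotient is junk, but then `u z = 0` and `u z = f z * φ z` still holds
  set f : ι → ℂ := fun z => u z / φ z
  have hu_eq : ∀ z, u z = f z * φ z := fun z =>
    (div_mul_cancel_of_imp fun h => hu z (by exact_mod_cast h)).symm
  set g : ι → ι → ℝ := fun z w => A z w * φ z * φ w
  have hg : ∀ z w, g z w = g w z := fun z w => by
    simp only [g, hA.apply w z]; ring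
  have hrow : ∀ z, ∑ w, g z w = φ z * (A *ᵥ φ) z := fun z => by
    simp only [g, mulVec, dotProduct, Finset.mul_sum]
    exact Finset.sum_congr rfl fun w _ => by ring
  have hquad : (star u ⬝ᵥ A.map (↑) *ᵥ u).re
      = ∑ z, ∑ w, g z w * (starRingEnd ℂ (f z) * f w).re := by
    simp only [dotProduct, mulVec, Finset.mul_sum, Complex.re_sum, Pi.star_apply, map_apply]
    refine Finset.sum_congr rfl fun z _ => Finset.sum_congr rfl fun w _ => ?_
    have hterm : star (u z) * ((A z w : ℂ) * u w)
        = (g z w : ℂ) * (starRingEnd ℂ (f z) * f w) := by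
      rw [hu_eq z, hu_eq w, Complex.star_def, map_mul, Complex.conj_ofReal]
      push_cast [g]
      ring
    rw [hterm, Complex.re_ofReal_mul]
  have hdiff_nonpos : ∑ z, ∑ w, g z w * ‖f z - f w‖ ^ 2 ≤ 0 := by
    refine Finset.sum_nonpos fun z _ => Finset.sum_nonpos fun w _ => ?_
    obtain rfl | hzw := eq_or_ne z w
    · simp
    · exact mul_nonpos_of_nonpos_of_nonneg (mul_nonpos_of_nonpos_of_nonneg
        (mul_nonpos_of_nonpos_of_nonneg (hoff z w hzw) (hφ z)) (hφ w)) (sq_nonneg _)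
  have hdiag : c * ∑ z, ‖u z‖ ^ 2 ≤ ∑ z, ‖f z‖ ^ 2 * ∑ w, g z w := by
    rw [Finset.mul_sum]
    refine Finset.sum_le_sum fun z _ => ?_
    rw [hrow]
    obtain hz | hz := (hφ z).eq_or_lt
    · simp [hu z hz.symm, ← hz]
    · calc c * ‖u z‖ ^ 2 = ‖f z‖ ^ 2 * φ z * (c * φ z) := by
            rw [hu_eq z, norm_mul, Complex.norm_real, Real.norm_of_nonneg hz.le]; ring
        _ ≤ ‖f z‖ ^ 2 * φ z * (A *ᵥ φ) z :=
            mul_le_mul_of_nonneg_left (hc z hz) (mul_nonneg (sq_nonneg _) hz.le)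
        _ = ‖f z‖ ^ 2 * (φ z * (A *ᵥ φ) z) := mul_assoc _ _ _
  rw [sum_sum_mul_norm_sub_sq hg] at hdiff_nonpos
  linarith

theorem Matrix.map_ofReal_mulVec_apply (A : Matrix ι ι ℝ) (φ : ι → ℝ) (z : ι) :
    (A.map (↑) *ᵥ ((↑) ∘ φ)) z = ((A *ᵥ φ) z : ℂ) :=
  (RingHom.map_mulVec Complex.ofRealHom A φ z).symm

theorem Matrix.IsSymm.le_sortedEigsC_getD_one [DecidableEq ι] {A : Matrix ι ι ℝ}
    (hA : A.IsSymm) (hoff : ∀ z w, z ≠ w → A z w ≤ 0) (hcard : 2 ≤ Fintype.card ι) {z₀ : ι}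
    {φ : ι → ℝ} (hφ₀ : φ z₀ = 0) (hφ : ∀ z, z ≠ z₀ → 0 < φ z) {c : ℝ}
    (hc : ∀ z, z ≠ z₀ → c * φ z ≤ (A *ᵥ φ) z) :
    c ≤ (sortedEigsC (A.map (↑))).getD 1 0 := by
  have hsupp : ∀ z, φ z = 0 → z = z₀ := fun z hz => by_contra fun hne => (hφ z hne).ne' hz
  have hH : (A.map ((↑) : ℝ → ℂ)).IsHermitian :=
    (isHermitian_iff_isSymm.2 hA).map _ fun x => (Complex.conj_ofReal x).symm
  refine hH.le_sortedEigsC_getD_one hcard z₀ fun ψ hψ =>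
    hA.mul_sum_norm_sq_le_re_star_dotProduct_mulVec hoff ?_ ?_ fun z hz => hsupp z hz ▸ hψ
  · intro z
    obtain rfl | hz := eq_or_ne z z₀
    exacts [hφ₀.ge, (hφ z hz).le]
  · exact fun z hz => hc z fun h => hz.ne' (h ▸ hφ₀)

end

/-- Collatz–Wielandt-type lower bound for the first excited energy: if `H` is Hermitian
with real nonpositive off-diagonal entries, `χ(z₀) = 0` and `χ(z) > 0` for `z ≠ z₀`, then
the second-smallest eigenvalue `E_1` of `H` (with multiplicity) satisfies
`E_1 ≥ min_{z ≠ z₀} (Hχ)(z)/χ(z)`. -/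
theorem stmt9 {ι : Type*} [Fintype ι] [DecidableEq ι] (hcard : 2 ≤ Fintype.card ι)
    (H : Matrix ι ι ℂ) (hH : H.IsHermitian)
    (hsto : ∀ z z', z ≠ z' → H z z' ≤ 0)
    (z₀ : ι) (χ : ι → ℂ) (hχ0 : χ z₀ = 0) (hχ : ∀ z, z ≠ z₀ → 0 < χ z) :
    (Finset.univ.erase z₀).inf'
        (by
          obtain ⟨y, hy⟩ := Fintype.exists_ne_of_one_lt_card (by omega) z₀
          exact ⟨y, Finset.mem_erase.mpr ⟨hy, Finset.mem_univ y⟩⟩)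
        (fun z => ((H.mulVec χ) z / χ z).re) ≤
      (sortedEigsC H).getD 1 0 := by
  obtain ⟨A, hA, rfl⟩ :=
    hH.exists_isSymm_map_ofReal_eq fun z w h => (Complex.le_def.1 (hsto z w h)).2
  obtain ⟨φ, rfl⟩ : ∃ φ : ι → ℝ, (↑) ∘ φ = χ := by
    refine ⟨fun z => (χ z).re, funext fun z => Complex.ext rfl ?_⟩
    obtain rfl | hz := eq_or_ne z z₀
    · simp [hχ0]
    · exact (Complex.pos_iff.1 (hχ z hz)).2
  simp only [Function.comp_apply, Complex.ofReal_eq_zero, Complex.zero_lt_real] at hχ0 hχ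
  simp only [Matrix.map_apply] at hsto
  refine hA.le_sortedEigsC_getD_one (fun z w h => by exact_mod_cast hsto z w h) hcard hχ0 hχ
    fun z hz => ?_
  refine (le_div_iff₀ (hχ z hz)).1 ?_
  calc _ ≤ (((A.map (↑)).mulVec ((↑) ∘ φ)) z / ((↑) ∘ φ) z : ℂ).re :=
        Finset.inf'_le _ (Finset.mem_erase.2 ⟨hz, Finset.mem_univ z⟩)
    _ = (A.mulVec φ) z / φ z := by
        rw [Matrix.map_ofReal_mulVec_apply, Function.comp_apply, ← Complex.ofReal_div,
          Complex.ofReal_re]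
end

section
/- Let 0 < γ < 1, let k be a positive integer with k ≤ n, and let M be a set of n-bit strings with |M| ≤ 2^{γn}. Let π be a uniformly random permutation of the set of all n-bit strings, and let π(M) be the image of M under π. Let q be the probability that there exist an n-bit string y and a set of k distinct indices {j_1, ..., j_k} ⊆ {1, ..., n} such that {y⊕e_{j_1}, ..., y⊕e_{j_k}} ⊆ π(M). Then q ≤ n^k · 2^{n[1 - k(1-γ)]}. -/
open scoped Classical

/-- `z ⊕ e_i`: the string `z` with bit `i` flipped. -/
def flipBit {n : ℕ} (z : BitStr n) (i : Fin n) : BitStr n := Function.update z i (!z i)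

/-!
Union bound over the `2^n` centres `y` and the `C(n,k) ≤ n^k` position sets `J`. For fixed `y`
and `J` the `k` strings `y ⊕ e_j` are distinct, and a uniform `π` puts a fixed `k`-set inside
`π(M)` with probability `|M|^(k falling) / (2^n)^(k falling) ≤ (|M| / 2^n)^k ≤ 2^(-kn(1-γ))`.
-/

open Finset
open scoped Nat

namespace Nat

theorem descFactorial_mul_pow_le_pow_mul_descFactorial {m N : ℕ} (h : m ≤ N) (k : ℕ) :
    m.descFactorial k * N ^ k ≤ m ^ k * N.descFactorial k := by
  induction k with
  | zero => simp
  | succ k ih =>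
    have hstep : (m - k) * N ≤ m * (N - k) := by
      rw [Nat.sub_mul, Nat.mul_sub]
      exact Nat.sub_le_sub_left (by rw [Nat.mul_comm k]; exact Nat.mul_le_mul_right k h) _
    calc m.descFactorial (k + 1) * N ^ (k + 1)
        = m.descFactorial k * N ^ k * ((m - k) * N) := by
          rw [descFactorial_succ, pow_succ]; ring
      _ ≤ m ^ k * N.descFactorial k * (m * (N - k)) := Nat.mul_le_mul ih hstep
      _ = m ^ (k + 1) * N.descFactorial (k + 1) := by
          rw [descFactorial_succ, pow_succ]; ring

theorem descFactorial_div_descFactorial_le {m N : ℕ} (h : m ≤ N) (k : ℕ) :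
    (m.descFactorial k : ℝ) / N.descFactorial k ≤ ((m : ℝ) / N) ^ k := by
  rcases (N.descFactorial k).eq_zero_or_pos with h0 | hpos
  · rw [h0, Nat.cast_zero, div_zero]; positivity
  have hNk : (0 : ℝ) < N ^ k := by exact_mod_cast hpos.trans_le (N.descFactorial_le_pow k)
  rw [div_pow, div_le_div_iff₀ (by exact_mod_cast hpos) hNk]
  exact_mod_cast descFactorial_mul_pow_le_pow_mul_descFactorial h k

end Nat

namespace Equiv.Perm

variable {α : Type*} [DecidableEq α]

theorem subset_image_iff_forall_inv_apply_mem (π : Perm α) (S M : Finset α) :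
    S ⊆ M.image π ↔ ∀ z ∈ S, π⁻¹ z ∈ M := by
  simp_rw [subset_iff, ← Equiv.coe_toEmbedding, ← map_eq_image, mem_map_equiv]
  rfl

variable [Fintype α]

theorem card_filter_forall_mem_apply_eq_self (S : Finset α) :
    #{π : Perm α | ∀ z ∈ S, π z = z} = (Fintype.card α - #S)! := by
  have e : {π : Perm α // ∀ z ∈ S, π z = z} ≃ Perm {x : α // x ∉ S} :=
    (Equiv.subtypeEquivRight fun π => by simp only [not_not]).trans
      (Perm.subtypeEquivSubtypePerm fun x => x ∉ S).symm
  rw [← Fintype.card_subtype, Fintype.card_congr e, Fintype.card_perm,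
    Fintype.card_subtype_compl, Fintype.card_coe]

theorem card_filter_forall_apply_eq_le {S : Finset α} (g : S → α) :
    #{π : Perm α | ∀ z : S, π z = g z} ≤ (Fintype.card α - #S)! := by
  obtain h | ⟨σ, hσ⟩ := (filter (fun π : Perm α => ∀ z : S, π z = g z) univ).eq_empty_or_nonempty
  · rw [h, card_empty]; exact Nat.zero_le _
  rw [← card_filter_forall_mem_apply_eq_self S]
  -- `π ↦ σ⁻¹ * π` sends permutations agreeing with `σ` on `S` to permutations fixing `S`.
  refine card_le_card_of_injOn (σ⁻¹ * ·) (fun π hπ => ?_) (mul_right_injective σ⁻¹).injOn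
  simp only [coe_filter, mem_filter, mem_univ, true_and] at hσ hπ ⊢
  intro z hz
  rw [mul_apply, hπ ⟨z, hz⟩, ← hσ ⟨z, hz⟩, inv_eq_iff_eq]

theorem card_filter_forall_mem_apply_mem_le (S M : Finset α) :
    #{π : Perm α | ∀ z ∈ S, π z ∈ M} ≤ (#M).descFactorial #S * (Fintype.card α - #S)! := by
  let restrict : {π : Perm α // ∀ z ∈ S, π z ∈ M} → (S ↪ M) := fun π =>
    ⟨fun z => ⟨π.1 z, π.2 z z.2⟩, fun _ _ h => Subtype.ext (π.1.injective (congrArg Subtype.val h))⟩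
  have hfiber (g : S ↪ M) : #{π | restrict π = g} ≤ (Fintype.card α - #S)! := by
    refine le_trans (card_le_card_of_injOn Subtype.val (fun π hπ => ?_) Subtype.val_injective.injOn)
      (card_filter_forall_apply_eq_le fun z => (g z : α))
    simp only [coe_filter, mem_univ, true_and] at hπ ⊢
    intro z
    rw [← hπ]
    rfl
  calc #{π : Perm α | ∀ z ∈ S, π z ∈ M}
      = #(univ : Finset {π : Perm α // ∀ z ∈ S, π z ∈ M}) := by
        rw [Finset.card_univ, Fintype.card_subtype]
    _ ≤ (Fintype.card α - #S)! * #(univ : Finset (S ↪ M)) :=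
        card_le_mul_card_image_of_maps_to (fun _ _ => mem_univ _) _ fun g _ => hfiber g
    _ = (#M).descFactorial #S * (Fintype.card α - #S)! := by
        rw [Finset.card_univ, Fintype.card_embedding_eq, Fintype.card_coe, Fintype.card_coe,
          mul_comm]

theorem card_filter_subset_image_le (S M : Finset α) :
    #{π : Perm α | S ⊆ M.image π} ≤ (#M).descFactorial #S * (Fintype.card α - #S)! := by
  refine le_of_eq_of_le (card_equiv (Equiv.inv (Perm α)) fun π => ?_)
    (card_filter_forall_mem_apply_mem_le S M)
  simp only [mem_filter, mem_univ, true_and, Equiv.inv_apply, subset_image_iff_forall_inv_apply_mem]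

theorem card_filter_subset_image_div_le (S M : Finset α) :
    (#{π : Perm α | S ⊆ M.image π} : ℝ) / (Fintype.card α)! ≤ ((#M : ℝ) / Fintype.card α) ^ #S := by
  set N := Fintype.card α
  have hfact : ((N - #S)! * N.descFactorial #S : ℝ) = N ! := by
    exact_mod_cast Nat.factorial_mul_descFactorial (card_le_univ S)
  calc (#{π : Perm α | S ⊆ M.image π} : ℝ) / N !
      ≤ ((#M).descFactorial #S * (N - #S)! : ℝ) / ((N - #S)! * N.descFactorial #S) := by
        rw [hfact]
        gcongr
        exact_mod_cast card_filter_subset_image_le S M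
    _ = ((#M).descFactorial #S : ℝ) / N.descFactorial #S := by
        rw [mul_comm ((N - #S)! : ℝ), mul_div_mul_right _ _ (by positivity)]
    _ ≤ ((#M : ℝ) / N) ^ #S := Nat.descFactorial_div_descFactorial_le (card_le_univ M) _

end Equiv.Perm

theorem flipBit_injective {n : ℕ} (y : BitStr n) : Function.Injective (flipBit y) := by
  intro i j hij
  by_contra hne
  simpa [flipBit, Function.update_of_ne hne] using congrFun hij i

theorem prPerm_le_sum {n : ℕ} {ι : Type*} (I : Finset ι) {P : Equiv.Perm (BitStr n) → Prop}
    (Q : ι → Equiv.Perm (BitStr n) → Prop) (hPQ : ∀ π, P π → ∃ i ∈ I, Q i π) :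
    prPerm n P ≤ ∑ i ∈ I, prPerm n (Q i) := by
  simp only [prPerm, ← sum_div]
  gcongr
  calc (#{π | P π} : ℝ) ≤ #(I.biUnion fun i => {π | Q i π}) := by
        gcongr
        intro π hπ
        obtain ⟨i, hi, hQ⟩ := hPQ π (mem_filter.mp hπ).2
        exact mem_biUnion.mpr ⟨i, hi, mem_filter.mpr ⟨mem_univ π, hQ⟩⟩
    _ ≤ ∑ i ∈ I, (#{π | Q i π} : ℝ) := by exact_mod_cast card_biUnion_le

theorem prPerm_subset_image_le {n : ℕ} (S M : Finset (BitStr n)) :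
    prPerm n (fun π => S ⊆ M.image π) ≤ ((#M : ℝ) / 2 ^ n) ^ #S := by
  have h := Equiv.Perm.card_filter_subset_image_div_le S M
  rw [Fintype.card_fun, Fintype.card_bool, Fintype.card_fin] at h
  rw [prPerm, Fintype.card_perm, Fintype.card_fun, Fintype.card_bool, Fintype.card_fin]
  convert h
  push_cast; rfl

theorem prPerm_image_flipBit_subset_le {n : ℕ} (y : BitStr n) (J : Finset (Fin n))
    (M : Finset (BitStr n)) :
    prPerm n (fun π => J.image (flipBit y) ⊆ M.image π) ≤ ((#M : ℝ) / 2 ^ n) ^ #J := by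
  simpa only [card_image_of_injective J (flipBit_injective y)] using
    prPerm_subset_image_le (J.image (flipBit y)) M

theorem stmt11_general (n : ℕ) (γ : ℝ)
    (k : ℕ)
    (M : Finset (BitStr n)) (hM : (M.card : ℝ) ≤ (2 : ℝ) ^ (γ * n)) :
    prPerm n (fun π => ∃ y : BitStr n, ∃ J : Finset (Fin n), J.card = k ∧
        ∀ j ∈ J, flipBit y j ∈ M.image π) ≤
      (n : ℝ) ^ k * (2 : ℝ) ^ ((n : ℝ) * (1 - k * (1 - γ))) := by
  have hdensity : (#M : ℝ) / 2 ^ n ≤ 2 ^ ((n : ℝ) * (γ - 1)) := by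
    rw [show (n : ℝ) * (γ - 1) = γ * n - n by ring, Real.rpow_sub two_pos, Real.rpow_natCast]
    gcongr
  calc _ ≤ ∑ p ∈ (univ : Finset (BitStr n)) ×ˢ powersetCard k univ,
          prPerm n (fun π => p.2.image (flipBit p.1) ⊆ M.image π) :=
        prPerm_le_sum _ _ fun π ⟨y, J, hJ, hyJ⟩ =>
          ⟨(y, J), by simp [hJ], image_subset_iff.mpr hyJ⟩
    _ ≤ ∑ _p ∈ (univ : Finset (BitStr n)) ×ˢ powersetCard k univ, ((#M : ℝ) / 2 ^ n) ^ k :=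
        sum_le_sum fun p hp => (mem_powersetCard.mp (mem_product.mp hp).2).2 ▸
          prPerm_image_flipBit_subset_le p.1 p.2 M
    _ = 2 ^ n * n.choose k * ((#M : ℝ) / 2 ^ n) ^ k := by
        simp only [sum_const, card_product, card_univ, Fintype.card_fun, Fintype.card_bool,
          Fintype.card_fin, card_powersetCard, nsmul_eq_mul, Nat.cast_mul, Nat.cast_pow,
          Nat.cast_ofNat]
    _ ≤ 2 ^ n * n ^ k * (2 ^ ((n : ℝ) * (γ - 1))) ^ k := by
        gcongr
        exact_mod_cast Nat.choose_le_pow n k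
    _ = (n : ℝ) ^ k * (2 : ℝ) ^ ((n : ℝ) * (1 - k * (1 - γ))) := by
        rw [← Real.rpow_mul_natCast zero_le_two, ← Real.rpow_natCast 2 n, mul_right_comm,
          ← Real.rpow_add two_pos]
        ring_nf

/-- If `|M| ≤ 2^{γn}` with `0 < γ < 1` and `1 ≤ k ≤ n`, then the probability that there
exist a string `y` and `k` distinct bit positions `j_1, …, j_k` with
`{y⊕e_{j_1}, …, y⊕e_{j_k}} ⊆ π(M)` is at most `n^k · 2^{n(1 - k(1-γ))}`. -/
theorem stmt11 (n : ℕ) (γ : ℝ) (hγ0 : 0 < γ) (hγ1 : γ < 1)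
    (k : ℕ) (hk : 1 ≤ k) (hkn : k ≤ n)
    (M : Finset (BitStr n)) (hM : (M.card : ℝ) ≤ (2 : ℝ) ^ (γ * n)) :
    prPerm n (fun π => ∃ y : BitStr n, ∃ J : Finset (Fin n), J.card = k ∧
        ∀ j ∈ J, flipBit y j ∈ M.image π) ≤
      (n : ℝ) ^ k * (2 : ℝ) ^ ((n : ℝ) * (1 - k * (1 - γ))) :=
  stmt11_general n γ k M hM
end

section
/- Let π be drawn uniformly at random from all (2^n)! permutations of {0,1}^n. Then Pr[ E_π(1/2) ≥ (n/4)·(1 - 5·n^{-1/4}) ] tends to 1 as n → ∞. -/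
/-!
At `s = 1/2` the Hamiltonian is `n/4 + W(π⁻¹ z)/2 - A/4`, where `A` is the adjacency matrix of
the hypercube. A weighted AM-GM inequality (a Schur test with weights `c z = W(π⁻¹ z) + δ`) gives
`A ≤ 2c` as soon as `∑ᵢ 1/c(z ⊕ eᵢ) ≤ 2` at every `z`, and then `H ≥ n/4 - δ/2`. With
`u = n^{1/4}` and `δ = 5u³/2` this is the claimed bound, and the sum condition can only fail at `z`
if at least `u²` neighbours of `z` have scrambled weight below `n/2 - u³`. By Hoeffding a fraction
at most `exp(-2u²)` of all strings is that light, and `π⁻¹` sends the neighbours of `z` to distinct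
strings, so a fixed `z` fails with probability at most `(2n exp(-2u²))^{u²} ≤ exp(-n)`; a union
bound over the `2ⁿ` strings leaves `(2/e)ⁿ`.
-/

open scoped Classical

namespace ScrambledHamming

open Finset Matrix

lemma two_mul_sq_le_exp {s : ℝ} (hs : 12 ≤ s) : 2 * s ^ 2 ≤ Real.exp s := by
  have := Real.pow_div_factorial_le_exp s (by linarith) 3
  norm_num [Nat.factorial] at this
  nlinarith [sq_nonneg s]

lemma two_mul_le_two_pow {n : ℕ} (hn : 1 ≤ n) : 2 * n ≤ 2 ^ n := by
  obtain ⟨m, rfl⟩ := Nat.exists_eq_add_of_le' hn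
  rw [pow_succ]
  have := Nat.lt_two_pow_self (n := m)
  omega

lemma factorial_sub_mul_pow_le {N K : ℕ} (h : 2 * K ≤ N) :
    (N - K).factorial * N ^ K ≤ 2 ^ K * N.factorial := by
  calc (N - K).factorial * N ^ K ≤ (N - K).factorial * (2 ^ K * N.descFactorial K) := by
        gcongr
        calc N ^ K ≤ (2 * (N + 1 - K)) ^ K := Nat.pow_le_pow_left (by omega) K
          _ ≤ 2 ^ K * N.descFactorial K := by
            rw [mul_pow]; gcongr; exact Nat.pow_sub_le_descFactorial N K
    _ = 2 ^ K * N.factorial := by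
        rw [← Nat.factorial_mul_descFactorial (show K ≤ N by omega)]; ring

lemma sum_sum_mul_le_of_involutive {α ι : Type*} [Fintype α] [Fintype ι] (f : α → ι → α)
    (hf : ∀ z i, f (f z i) i = z) (c : α → ℝ) (hc : ∀ z, 0 < c z) (v : α → ℝ) :
    ∑ z, ∑ i, v z * v (f z i) ≤ ∑ z, c z * (∑ i, 1 / c (f z i)) * v z ^ 2 := by
  have amgm : ∀ z i, v z * v (f z i)
      ≤ (c z / c (f z i) * v z ^ 2 + c (f z i) / c z * v (f z i) ^ 2) / 2 := by
    intro z i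
    have hcz := hc z
    have hcy := hc (f z i)
    rw [div_mul_eq_mul_div, div_mul_eq_mul_div, div_add_div _ _ (by positivity) (by positivity),
      div_div, le_div_iff₀ (by positivity)]
    nlinarith [sq_nonneg (c z * v z - c (f z i) * v (f z i)), mul_pos hcz hcy]
  let e : α × ι ≃ α × ι := ⟨fun p => (f p.1 p.2, p.2), fun p => (f p.1 p.2, p.2),
    fun p => by simp [hf], fun p => by simp [hf]⟩
  have reindex : ∑ z, ∑ i, c (f z i) / c z * v (f z i) ^ 2
      = ∑ z, ∑ i, c z / c (f z i) * v z ^ 2 := by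
    simp only [← Fintype.sum_prod_type']
    exact Fintype.sum_equiv e _ _ fun p => by simp [e, hf]
  calc ∑ z, ∑ i, v z * v (f z i)
      ≤ ∑ z, ∑ i, (c z / c (f z i) * v z ^ 2 + c (f z i) / c z * v (f z i) ^ 2) / 2 :=
        sum_le_sum fun z _ => sum_le_sum fun i _ => amgm z i
    _ = ∑ z, ∑ i, c z / c (f z i) * v z ^ 2 := by
        simp only [add_div, sum_add_distrib, ← sum_div, reindex]
        ring
    _ = ∑ z, c z * (∑ i, 1 / c (f z i)) * v z ^ 2 := by
        simp only [mul_sum, sum_mul]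
        congr! 2
        ring

lemma sum_one_div_add_le {ι : Type*} [Fintype ι] {w : ι → ℝ} (hw : ∀ i, 0 ≤ w i) {δ L : ℝ}
    (hδ : 0 < δ) (hL : 0 < L + δ) :
    ∑ i, 1 / (w i + δ) ≤ #{i | w i < L} / δ + Fintype.card ι / (L + δ) := by
  rw [← sum_filter_add_sum_filter_not univ (fun i => w i < L)]
  gcongr
  · calc ∑ i ∈ univ.filter (fun i => w i < L), 1 / (w i + δ)
        ≤ #{i | w i < L} • (1 / δ) :=
          sum_le_card_nsmul _ _ _ fun i _ => one_div_le_one_div_of_le hδ (by linarith [hw i])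
      _ = #{i | w i < L} / δ := by rw [nsmul_eq_mul, mul_one_div]
  · calc ∑ i ∈ univ.filter (fun i => ¬ w i < L), 1 / (w i + δ)
        ≤ #{i | ¬ w i < L} • (1 / (L + δ)) :=
          sum_le_card_nsmul _ _ _ fun i hi =>
            one_div_le_one_div_of_le hL (by linarith [not_lt.mp (mem_filter.mp hi).2])
      _ ≤ Fintype.card ι / (L + δ) := by
          rw [nsmul_eq_mul, mul_one_div]
          gcongr
          exact_mod_cast card_le_univ _

lemma le_eigenvalues_of_forall_le_dotProduct_mulVec {ι : Type*} [Fintype ι] [DecidableEq ι]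
    {A : Matrix ι ι ℝ} (hA : A.IsHermitian) {B : ℝ}
    (h : ∀ v : ι → ℝ, B * (v ⬝ᵥ v) ≤ v ⬝ᵥ (A *ᵥ v)) (i : ι) : B ≤ hA.eigenvalues i := by
  have hunit : ⇑(hA.eigenvectorBasis i) ⬝ᵥ ⇑(hA.eigenvectorBasis i) = 1 := by
    have := real_inner_self_eq_norm_sq (hA.eigenvectorBasis i)
    rwa [hA.eigenvectorBasis.orthonormal.1 i, one_pow] at this
  simpa [hA.eigenvalues_eq i, hunit] using h (hA.eigenvectorBasis i)

lemma le_sortedEigs_getD_zero {ι : Type*} [Fintype ι] [DecidableEq ι] [Nonempty ι]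
    {A : Matrix ι ι ℝ} (hA : A.IsHermitian) {B : ℝ}
    (h : ∀ v : ι → ℝ, B * (v ⬝ᵥ v) ≤ v ⬝ᵥ (A *ᵥ v)) : B ≤ (sortedEigs A).getD 0 0 := by
  have hdef : sortedEigs A = Multiset.sort (univ.val.map hA.eigenvalues) (· ≤ ·) := dif_pos hA
  have hle : ∀ x ∈ sortedEigs A, B ≤ x := by
    intro x hx
    rw [hdef, Multiset.mem_sort, Multiset.mem_map] at hx
    obtain ⟨i, -, rfl⟩ := hx
    exact le_eigenvalues_of_forall_le_dotProduct_mulVec hA h i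
  have hlen : 0 < (sortedEigs A).length := by
    simp [hdef, Fintype.card_pos]
  rw [List.getD_eq_getElem _ _ hlen]
  exact hle _ (List.getElem_mem hlen)

section PermutationCounting

variable {α ι : Type*} [Fintype α] [DecidableEq α] [Fintype ι]

lemma card_perm_fixing_eq (t : ι → α) (ht : Function.Injective t) :
    Fintype.card {σ : Equiv.Perm α // ∀ i, σ (t i) = t i}
      = (Fintype.card α - Fintype.card ι).factorial := by
  set S := univ.image t
  have hfix : ∀ σ : Equiv.Perm α, (∀ i, σ (t i) = t i) ↔ ∀ a, ¬ (a ∉ S) → σ a = a := by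
    simp [S]
  rw [Fintype.card_congr ((Equiv.subtypeEquivRight hfix).trans
      (Equiv.Perm.subtypeEquivSubtypePerm (· ∉ S)).symm), Fintype.card_perm,
    Fintype.card_subtype_compl, Fintype.card_coe, card_image_of_injective _ ht, card_univ]

-- For `π₀` in the fibre, `π ↦ π⁻¹ * π₀` embeds it in the pointwise stabiliser of `range t`.
lemma card_filter_perm_symm_eq_le (y : ι → α) (hy : Function.Injective y) (t : ι → α) :
    #{π : Equiv.Perm α | ∀ i, π.symm (y i) = t i}
      ≤ (Fintype.card α - Fintype.card ι).factorial := by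
  rcases Finset.eq_empty_or_nonempty (univ.filter fun π : Equiv.Perm α => ∀ i, π.symm (y i) = t i)
    with hempty | ⟨π₀, hπ₀⟩
  · simp [hempty]
  simp only [mem_filter, mem_univ, true_and] at hπ₀
  have ht : Function.Injective t := fun i j hij => hy <| by
    rw [← π₀.apply_symm_apply (y i), ← π₀.apply_symm_apply (y j), hπ₀, hπ₀, hij]
  rw [← card_perm_fixing_eq t ht, ← Fintype.card_coe]
  refine Fintype.card_le_of_injective (fun π => ⟨π.1.symm * π₀, fun i => by
    rw [Equiv.Perm.mul_apply, ← hπ₀ i, Equiv.apply_symm_apply, (mem_filter.mp π.2).2 i, hπ₀ i]⟩)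
    fun π π' h => Subtype.ext ?_
  exact Equiv.symm_bijective.injective (mul_right_cancel (congrArg Subtype.val h))

lemma card_filter_perm_symm_mem_le (y : ι → α) (hy : Function.Injective y) (D : Finset α) :
    #{π : Equiv.Perm α | ∀ i, π.symm (y i) ∈ D}
      ≤ (Fintype.card α - Fintype.card ι).factorial * #D ^ Fintype.card ι := by
  have := card_le_mul_card_image_of_maps_to (f := fun π : Equiv.Perm α => fun i => π.symm (y i))
    (s := univ.filter fun π => ∀ i, π.symm (y i) ∈ D) (t := Fintype.piFinset fun _ => D)
    (by simp) _ fun t _ =>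
      (card_le_card fun π => by simp [funext_iff]).trans (card_filter_perm_symm_eq_le y hy t)
  simpa using this

lemma card_filter_perm_many_symm_mem_le (y : ι → α) (hy : Function.Injective y)
    (D : Finset α) (K : ℕ) :
    #{π : Equiv.Perm α | K ≤ #{i | π.symm (y i) ∈ D}}
      ≤ (Fintype.card ι).choose K * ((Fintype.card α - K).factorial * #D ^ K) := by
  have hcover : univ.filter (fun π : Equiv.Perm α => K ≤ #{i | π.symm (y i) ∈ D})
      ⊆ (univ.powersetCard K).biUnion fun T =>
          univ.filter fun π : Equiv.Perm α => ∀ i : T, π.symm (y i.1) ∈ D := by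
    intro π hπ
    obtain ⟨T, hT, hTcard⟩ := exists_subset_card_eq (mem_filter.mp hπ).2
    simp only [mem_biUnion, mem_powersetCard, mem_filter, mem_univ, true_and]
    exact ⟨T, ⟨subset_univ T, hTcard⟩, fun i => (mem_filter.mp (hT i.2)).2⟩
  have hsubset : ∀ T ∈ univ.powersetCard K,
      #{π : Equiv.Perm α | ∀ i : T, π.symm (y i.1) ∈ D}
        ≤ (Fintype.card α - K).factorial * #D ^ K := by
    intro T hT
    have := card_filter_perm_symm_mem_le (fun i : T => y i) (hy.comp Subtype.val_injective) D
    rwa [Fintype.card_coe, (mem_powersetCard.mp hT).2] at this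
  calc #{π : Equiv.Perm α | K ≤ #{i | π.symm (y i) ∈ D}}
      ≤ ∑ T ∈ univ.powersetCard K, #{π : Equiv.Perm α | ∀ i : T, π.symm (y i.1) ∈ D} :=
        (card_le_card hcover).trans card_biUnion_le
    _ ≤ (Fintype.card ι).choose K * ((Fintype.card α - K).factorial * #D ^ K) := by
        simpa using sum_le_sum hsubset

lemma card_filter_perm_many_symm_mem_le_pow (y : ι → α) (hy : Function.Injective y)
    (D : Finset α) {K : ℕ} (hK : 2 * K ≤ Fintype.card α) {p : ℝ} (hp : 0 ≤ p)
    (hD : (#D : ℝ) ≤ Fintype.card α * p) :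
    (#{π : Equiv.Perm α | K ≤ #{i | π.symm (y i) ∈ D}} : ℝ)
      ≤ (Fintype.card α).factorial * (2 * Fintype.card ι * p) ^ K := by
  set N := Fintype.card α
  set m := Fintype.card ι
  have hfac : ((N - K).factorial : ℝ) * N ^ K ≤ 2 ^ K * N.factorial := by
    exact_mod_cast factorial_sub_mul_pow_le hK
  calc (#{π : Equiv.Perm α | K ≤ #{i | π.symm (y i) ∈ D}} : ℝ)
      ≤ m.choose K * ((N - K).factorial * #D ^ K) := by
        exact_mod_cast card_filter_perm_many_symm_mem_le y hy D K
    _ ≤ m ^ K * ((N - K).factorial * (N * p) ^ K) := by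
        gcongr
        exact_mod_cast Nat.choose_le_pow m K
    _ = ((N - K).factorial * N ^ K) * (m * p) ^ K := by ring
    _ ≤ (2 ^ K * N.factorial) * (m * p) ^ K := by
        gcongr
    _ = N.factorial * (2 * m * p) ^ K := by ring

end PermutationCounting

section HammingWeightTail

open Real

lemma sum_exp_mul_hamW (n : ℕ) (c : ℝ) :
    ∑ x : BitStr n, exp (c * hamW x) = (1 + exp c) ^ n := by
  have hprod : ∀ x : BitStr n, exp (c * hamW x) = ∏ i, exp (c * if x i then 1 else 0) := by
    intro x
    rw [← exp_sum, ← mul_sum, hamW, card_filter]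
    push_cast
    rfl
  rw [sum_congr rfl fun x _ => hprod x,
    ← Fintype.sum_pow (fun b : Bool => exp (c * if b then 1 else 0))]
  simp [add_comm]

lemma card_hamW_lt_le (n : ℕ) {b : ℝ} (hb : 0 ≤ b) :
    (#{x : BitStr n | (hamW x : ℝ) < n / 2 - b} : ℝ) ≤ 2 ^ n * exp (-(2 * b ^ 2 / n)) := by
  -- Chernoff's bound with `cosh x ≤ exp (x² / 2)`; `t = 4b/n` minimises `-tb + nt²/8`.
  set t : ℝ := 4 * b / n
  have ht : 0 ≤ t := by positivity
  have markov : (#{x : BitStr n | (hamW x : ℝ) < n / 2 - b} : ℝ)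
      ≤ ∑ x : BitStr n, exp (t * (n / 2 - b) + (-t) * hamW x) := by
    rw [card_filter]
    push_cast
    refine sum_le_sum fun x _ => ?_
    split_ifs with hx
    · exact one_le_exp (by nlinarith)
    · positivity
  have hfactor : 1 + exp (-t) = 2 * cosh (t / 2) * exp (-(t / 2)) := by
    have h1 : exp (t / 2) * exp (-(t / 2)) = 1 := by rw [← exp_add]; simp
    have h2 : exp (-t) = exp (-(t / 2)) * exp (-(t / 2)) := by rw [← exp_add]; ring_nf
    rw [cosh_eq, h2]
    linear_combination -h1
  have hexponent : -(t * b) + n * (t ^ 2 / 8) = -(2 * b ^ 2 / n) := by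
    rcases eq_or_ne (n : ℝ) 0 with hn | hn
    · simp [t, hn]
    · simp only [t]; field_simp; ring
  calc (#{x : BitStr n | (hamW x : ℝ) < n / 2 - b} : ℝ)
      ≤ exp (t * (n / 2 - b)) * (1 + exp (-t)) ^ n := by
        simpa only [exp_add, ← mul_sum, sum_exp_mul_hamW] using markov
    _ = 2 ^ n * cosh (t / 2) ^ n * exp (-(t * b)) := by
        rw [hfactor, mul_pow, mul_pow, ← exp_nat_mul,
          show -(t * b) = t * (n / 2 - b) + n * -(t / 2) by ring, exp_add]
        ring
    _ ≤ 2 ^ n * exp (t ^ 2 / 8) ^ n * exp (-(t * b)) := by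
        gcongr
        exact (cosh_le_exp_half_sq _).trans_eq (by ring_nf)
    _ = 2 ^ n * exp (-(2 * b ^ 2 / n)) := by
        rw [← exp_nat_mul, mul_assoc, ← exp_add, ← hexponent, add_comm]

end HammingWeightTail

section Hypercube

variable {n : ℕ}

def flipBit (z : BitStr n) (i : Fin n) : BitStr n := Function.update z i (!z i)

lemma flipBit_apply (z : BitStr n) (i j : Fin n) :
    flipBit z i j = if j = i then !z j else z j := by
  by_cases h : j = i
  · subst h; simp [flipBit]
  · simp [flipBit, h]

@[simp]
lemma flipBit_flipBit (z : BitStr n) (i : Fin n) : flipBit (flipBit z i) i = z := by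
  simp [flipBit]

lemma flipBit_injective (z : BitStr n) : Function.Injective (flipBit z) := by
  intro i j h
  by_contra hij
  simpa [flipBit_apply, hij] using congrFun h i

lemma filter_card_ne_eq_one (z : BitStr n) :
    univ.filter (fun z' : BitStr n => #{j | z j ≠ z' j} = 1) = univ.image (flipBit z) := by
  ext z'
  simp only [mem_filter, mem_univ, true_and, mem_image, card_eq_one, Finset.ext_iff,
    mem_singleton]
  refine ⟨fun ⟨i, hi⟩ => ⟨i, funext fun j => ?_⟩, fun ⟨i, hi⟩ => ⟨i, fun j => ?_⟩⟩
  · have := hi j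
    revert this
    rw [flipBit_apply]
    split_ifs <;> cases z j <;> cases z' j <;> simp_all
  · subst hi
    rw [flipBit_apply]
    split_ifs <;> simp_all

lemma Hpi_mulVec (π : Equiv.Perm (BitStr n)) (s : ℝ) (v : BitStr n → ℝ) (z : BitStr n) :
    (Hpi n π s *ᵥ v) z = ((1 - s) * n / 2 + s * hamW (π.symm z)) * v z
      - (1 - s) / 2 * ∑ i, v (flipBit z i) := by
  have hoff : ∑ z', (if #{j | z j ≠ z' j} = 1 then -(1 - s) / 2 else 0) * v z'
      = -((1 - s) / 2 * ∑ i, v (flipBit z i)) := by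
    simp_rw [ite_mul, zero_mul]
    rw [← sum_filter, filter_card_ne_eq_one, sum_image fun i _ j _ h => flipBit_injective z h,
      ← mul_sum, neg_div, neg_mul]
  have hsplit : ∀ z', Hpi n π s z z' * v z'
      = (if z = z' then ((1 - s) * n / 2 + s * hamW (π.symm z)) * v z' else 0)
        + (if #{j | z j ≠ z' j} = 1 then -(1 - s) / 2 else 0) * v z' := by
    intro z'
    by_cases h : z = z'
    · subst h; simp [Hpi]
    · simp [Hpi, h]
  simp only [mulVec, dotProduct, hsplit, sum_add_distrib, hoff, sum_ite_eq, mem_univ, if_true]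
  ring

lemma Hpi_isHermitian (π : Equiv.Perm (BitStr n)) (s : ℝ) : (Hpi n π s).IsHermitian := by
  ext z z'
  by_cases h : z = z'
  · subst h; simp [Hpi]
  · simp [Hpi, h, Ne.symm h, ne_comm]

lemma le_dotProduct_Hpi_half_mulVec (π : Equiv.Perm (BitStr n)) {δ : ℝ} (hδ : 0 < δ)
    (h : ∀ z, ∑ i, 1 / ((hamW (π.symm (flipBit z i)) : ℝ) + δ) ≤ 2) (v : BitStr n → ℝ) :
    (n / 4 - δ / 2) * (v ⬝ᵥ v) ≤ v ⬝ᵥ (Hpi n π (1 / 2) *ᵥ v) := by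
  set c : BitStr n → ℝ := fun z => hamW (π.symm z) + δ
  have hc : ∀ z, 0 < c z := fun z => by positivity
  have hform : v ⬝ᵥ (Hpi n π (1 / 2) *ᵥ v) = ∑ z, (n / 4 + hamW (π.symm z) / 2) * v z ^ 2
      - 1 / 4 * ∑ z, ∑ i, v z * v (flipBit z i) := by
    simp only [dotProduct, Hpi_mulVec, mul_sum, ← sum_sub_distrib]
    refine sum_congr rfl fun z _ => ?_
    simp only [← mul_sum]
    ring
  have hlhs : (n / 4 - δ / 2) * (v ⬝ᵥ v) = ∑ z, (n / 4 + hamW (π.symm z) / 2) * v z ^ 2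
      - 1 / 4 * ∑ z, 2 * c z * v z ^ 2 := by
    simp only [dotProduct, mul_sum, ← sum_sub_distrib, c]
    refine sum_congr rfl fun z _ => ?_
    ring
  have hweights : ∑ z, c z * (∑ i, 1 / c (flipBit z i)) * v z ^ 2 ≤ ∑ z, 2 * c z * v z ^ 2 :=
    sum_le_sum fun z _ => by
      have := hc z
      calc c z * (∑ i, 1 / c (flipBit z i)) * v z ^ 2 ≤ c z * 2 * v z ^ 2 := by
            gcongr; exact h z
        _ = 2 * c z * v z ^ 2 := by ring
  have := sum_sum_mul_le_of_involutive flipBit flipBit_flipBit c hc v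
  linarith

lemma Epi_half_ge_of_forall_sum_inv_le_two (π : Equiv.Perm (BitStr n)) {δ : ℝ} (hδ : 0 < δ)
    (h : ∀ z, ∑ i, 1 / ((hamW (π.symm (flipBit z i)) : ℝ) + δ) ≤ 2) :
    n / 4 - δ / 2 ≤ Epi n π (1 / 2) :=
  le_sortedEigs_getD_zero (Hpi_isHermitian π _) (le_dotProduct_Hpi_half_mulVec π hδ h)

noncomputable def lightStrings (n : ℕ) (u : ℝ) : Finset (BitStr n) :=
  {x | (hamW x : ℝ) < n / 2 - u ^ 3}

lemma card_lightStrings_le {u : ℝ} (hu : 0 ≤ u) (hn : (n : ℝ) = u ^ 4) :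
    (#(lightStrings n u) : ℝ) ≤ 2 ^ n * Real.exp (-(2 * u ^ 2)) := by
  have := card_hamW_lt_le n (b := u ^ 3) (by positivity)
  rwa [show 2 * (u ^ 3) ^ 2 / (n : ℝ) = 2 * u ^ 2 by rw [hn]; field_simp] at this

lemma Epi_half_ge_of_forall_card_lt (π : Equiv.Perm (BitStr n)) {u : ℝ} (hu : 1 ≤ u)
    (hn : (n : ℝ) = u ^ 4)
    (h : ∀ z, #{i | π.symm (flipBit z i) ∈ lightStrings n u} < ⌈u ^ 2⌉₊) :
    n / 4 - 5 / 4 * u ^ 3 ≤ Epi n π (1 / 2) := by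
  have hδ : 0 < 5 / 2 * u ^ 3 := by positivity
  have hL : (n : ℝ) / 2 - u ^ 3 + 5 / 2 * u ^ 3 = u ^ 4 / 2 + 3 / 2 * u ^ 3 := by rw [hn]; ring
  refine le_of_eq_of_le (by ring) (Epi_half_ge_of_forall_sum_inv_le_two π hδ fun z => ?_)
  have hlight : (#{i | (hamW (π.symm (flipBit z i)) : ℝ) < n / 2 - u ^ 3} : ℝ) ≤ u ^ 2 := by
    simpa [lightStrings] using (Nat.lt_ceil.mp (h z)).le
  calc ∑ i, 1 / ((hamW (π.symm (flipBit z i)) : ℝ) + 5 / 2 * u ^ 3)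
      ≤ #{i | (hamW (π.symm (flipBit z i)) : ℝ) < n / 2 - u ^ 3} / (5 / 2 * u ^ 3)
          + Fintype.card (Fin n) / (n / 2 - u ^ 3 + 5 / 2 * u ^ 3) :=
        sum_one_div_add_le (fun i => Nat.cast_nonneg _) hδ (by rw [hL]; positivity)
    _ ≤ u ^ 2 / (5 / 2 * u ^ 3) + n / (u ^ 4 / 2 + 3 / 2 * u ^ 3) := by
        rw [Fintype.card_fin, hL]
        gcongr
    _ ≤ 2 := by
        rw [hn, div_add_div _ _ (by positivity) (by positivity), div_le_iff₀ (by positivity)]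
        nlinarith [pow_pos (zero_lt_one.trans_le hu) 5, pow_le_pow_left₀ zero_le_one hu 5]

lemma card_filter_perm_many_light_le {u : ℝ} (hu : 4 ≤ u) (hn : (n : ℝ) = u ^ 4)
    (z : BitStr n) :
    (#{π : Equiv.Perm (BitStr n) |
        ⌈u ^ 2⌉₊ ≤ #{i | π.symm (flipBit z i) ∈ lightStrings n u}} : ℝ)
      ≤ (2 ^ n).factorial * Real.exp (-n) := by
  have hcard : Fintype.card (BitStr n) = 2 ^ n := by simp
  have hK : 2 * ⌈u ^ 2⌉₊ ≤ Fintype.card (BitStr n) := by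
    have hpos : 1 ≤ n := by exact_mod_cast hn ▸ one_le_pow₀ (by linarith : (1 : ℝ) ≤ u)
    have hle : ⌈u ^ 2⌉₊ ≤ n :=
      Nat.ceil_le.mpr <| hn ▸ pow_le_pow_right₀ (by linarith) (by norm_num)
    linarith [two_mul_le_two_pow hpos]
  have hbase : 2 * (n : ℝ) * Real.exp (-(2 * u ^ 2)) ≤ Real.exp (-u ^ 2) := by
    rw [show -u ^ 2 = u ^ 2 + -(2 * u ^ 2) by ring, Real.exp_add, hn]
    gcongr
    calc 2 * u ^ 4 = 2 * (u ^ 2) ^ 2 := by ring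
      _ ≤ Real.exp (u ^ 2) := two_mul_sq_le_exp (by nlinarith)
  have hlight :
      (#(lightStrings n u) : ℝ) ≤ Fintype.card (BitStr n) * Real.exp (-(2 * u ^ 2)) := by
    rw [hcard]; exact_mod_cast card_lightStrings_le (by linarith) hn
  refine (card_filter_perm_many_symm_mem_le_pow (flipBit z) (flipBit_injective z) _ hK
    (Real.exp_pos _).le hlight).trans ?_
  rw [hcard, Fintype.card_fin]
  gcongr
  calc (2 * (n : ℝ) * Real.exp (-(2 * u ^ 2))) ^ ⌈u ^ 2⌉₊ ≤ Real.exp (-u ^ 2) ^ ⌈u ^ 2⌉₊ := by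
        gcongr
    _ = Real.exp (-(u ^ 2 * ⌈u ^ 2⌉₊)) := by rw [← Real.exp_nat_mul]; ring_nf
    _ ≤ Real.exp (-n) := by
        rw [hn, show u ^ 4 = u ^ 2 * u ^ 2 by ring]
        gcongr
        exact Nat.le_ceil _

lemma card_not_Epi_half_ge_le {u : ℝ} (hu : 4 ≤ u) (hn : (n : ℝ) = u ^ 4) :
    (#{π : Equiv.Perm (BitStr n) | ¬ n / 4 - 5 / 4 * u ^ 3 ≤ Epi n π (1 / 2)} : ℝ)
      ≤ 2 ^ n * ((2 ^ n).factorial * Real.exp (-n)) := by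
  have hcover : univ.filter (fun π : Equiv.Perm (BitStr n) =>
        ¬ n / 4 - 5 / 4 * u ^ 3 ≤ Epi n π (1 / 2))
      ⊆ univ.biUnion fun z => univ.filter fun π : Equiv.Perm (BitStr n) =>
          ⌈u ^ 2⌉₊ ≤ #{i | π.symm (flipBit z i) ∈ lightStrings n u} := by
    intro π hπ
    have := mt (Epi_half_ge_of_forall_card_lt π (by linarith) hn) (mem_filter.mp hπ).2
    simpa using this
  refine le_trans ?_ ((sum_le_sum (s := univ) fun z _ =>
    card_filter_perm_many_light_le hu hn z).trans_eq (by simp))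
  exact_mod_cast (card_le_card hcover).trans card_biUnion_le

end Hypercube

lemma prPerm_le_one (n : ℕ) (P : Equiv.Perm (BitStr n) → Prop) : prPerm n P ≤ 1 :=
  div_le_one_of_le₀ (by exact_mod_cast card_le_univ _) (Nat.cast_nonneg _)

lemma prPerm_eq_one_sub (n : ℕ) (P : Equiv.Perm (BitStr n) → Prop) :
    prPerm n P = 1 - #{π | ¬ P π} / (2 ^ n).factorial := by
  have hcard : Fintype.card (Equiv.Perm (BitStr n)) = (2 ^ n).factorial := by
    rw [Fintype.card_perm]; simp
  have hsplit := card_filter_add_card_filter_not (s := univ) P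
  rw [card_univ, hcard] at hsplit
  rw [prPerm, hcard, eq_sub_iff_add_eq, ← add_div, div_eq_one_iff_eq (by positivity)]
  exact_mod_cast hsplit

lemma one_sub_two_div_exp_pow_le_prPerm {n : ℕ} {u : ℝ} (hu : 4 ≤ u) (hn : (n : ℝ) = u ^ 4) :
    1 - (2 / Real.exp 1) ^ n ≤ prPerm n fun π => n / 4 - 5 / 4 * u ^ 3 ≤ Epi n π (1 / 2) := by
  rw [prPerm_eq_one_sub, div_pow, ← Real.exp_nat_mul, mul_one, div_eq_mul_inv, ← Real.exp_neg]
  gcongr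
  rw [div_le_iff₀ (by positivity)]
  linarith [card_not_Epi_half_ge_le hu hn]

lemma natCast_eq_rpow_quarter_pow_four (n : ℕ) : (n : ℝ) = ((n : ℝ) ^ (1 / 4 : ℝ)) ^ 4 := by
  rw [← Real.rpow_natCast, ← Real.rpow_mul (Nat.cast_nonneg _)]
  norm_num

lemma div_four_mul_one_sub_eq {n : ℕ} (hn : 0 < n) :
    ((n : ℝ) / 4) * (1 - 5 * (n : ℝ) ^ (-(1 / 4) : ℝ))
      = n / 4 - 5 / 4 * ((n : ℝ) ^ (1 / 4 : ℝ)) ^ 3 := by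
  have h4 := natCast_eq_rpow_quarter_pow_four n
  have hpos : 0 < (n : ℝ) ^ (1 / 4 : ℝ) := by positivity
  rw [Real.rpow_neg (Nat.cast_nonneg _)]
  generalize (n : ℝ) ^ (1 / 4 : ℝ) = u at *
  rw [h4]
  field_simp

end ScrambledHamming

/-- `Pr[ E_π(1/2) ≥ (n/4)·(1 - 5·n^{-1/4}) ] → 1` as `n → ∞`. -/
theorem stmt14 :
    Filter.Tendsto
      (fun n : ℕ => prPerm n fun π =>
        Epi n π (1 / 2) ≥ ((n : ℝ) / 4) * (1 - 5 * (n : ℝ) ^ (-(1 / 4) : ℝ)))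
      Filter.atTop (nhds 1) := by
  have hratio : 2 / Real.exp 1 < 1 :=
    (div_lt_one (Real.exp_pos 1)).mpr (by linarith [Real.add_one_lt_exp one_ne_zero])
  have hgeom : Filter.Tendsto (fun n : ℕ => 1 - (2 / Real.exp 1) ^ n) Filter.atTop (nhds 1) := by
    simpa using (tendsto_pow_atTop_nhds_zero_of_lt_one (by positivity) hratio).const_sub 1
  have hquarter : Filter.Tendsto (fun n : ℕ => (n : ℝ) ^ (1 / 4 : ℝ)) Filter.atTop Filter.atTop :=
    (tendsto_rpow_atTop (by norm_num)).comp tendsto_natCast_atTop_atTop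
  refine tendsto_of_tendsto_of_tendsto_of_le_of_le' hgeom tendsto_const_nhds ?_
    (Filter.Eventually.of_forall fun n => ScrambledHamming.prPerm_le_one n _)
  filter_upwards [hquarter.eventually_ge_atTop 4, Filter.eventually_gt_atTop 0] with n hn4 hn0
  simp only [ge_iff_le, ScrambledHamming.div_four_mul_one_sub_eq hn0]
  exact ScrambledHamming.one_sub_two_div_exp_pow_le_prPerm hn4
    (ScrambledHamming.natCast_eq_rpow_quarter_pow_four n)
end

section
/- (Scrambled cost function lower bound.) Let N ≥ 2 and let h : {0, 1, ..., N-1} → ℝ satisfy h(0) = 0 and h(z) > 0 for all z ≠ 0; set h* = (Σ_z h(z)² / (N-1))^{1/2}. Let H_D : ℝ → (N × N Hermitian matrices over ℂ) be continuous, let c : ℝ → ℝ satisfy |c(t)| ≤ 1 for all t, let ψ₀ ∈ ℂ^N be a unit vector, and let T > 0. For each permutation π of {0, ..., N-1} let D_π be the diagonal matrix with (z,z) entry h(π⁻¹(z)), and let ψ_π : [0,T] → ℂ^N satisfy i·ψ_π'(t) = (H_D(t) + c(t)·D_π)·ψ_π(t) with ψ_π(0) = ψ₀. Let 0 < ε ≤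 1 with N ≥ 256/ε. If |⟨e_{π(0)}, ψ_π(T)⟩|² ≥ 1/2 for at least ε·N! permutations π, then T ≥ ε²·√N / (64·h*). -/
/-!
Compare the evolution for `π` with the one for `π * swap 0 b`: their Hamiltonians differ by
`c(t)` times a diagonal matrix supported on `{π 0, π b}` with entries `±h b` (as `h 0 = 0`).
Hence the potential `G t = ∑ b, ∑ π, Re ⟪ψ π t, ψ (π * swap 0 b) t⟫`, which equals `N * N!` at
`t = 0`, has `|G'| ≤ 2 N! √(∑ h²)` by Cauchy–Schwarz. At the final time,
`‖u z‖² ≤ 2‖u - v‖² + 2‖v z‖²` gives `Re ⟪u, v⟫ ≤ 1 - ‖u z‖²/4 + ‖v z‖²/2` for unit vectors;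
taking `z = π 0` and summing, `G T ≤ N * N! + N!/2 - (N/4) ∑ π, ‖ψ π T (π 0)‖²`, and the last
sum is at least `ε N!/2` by the success hypothesis. So `ε N - 4 ≤ 16 T √(∑ h²)`, which gives the
claim since `ε N ≥ 256` and `ε ≤ 1`.
-/

open Complex Equiv Finset Matrix Set
open scoped InnerProductSpace ComplexConjugate

section Schrodinger

variable {E : Type*} [NormedAddCommGroup E] [InnerProductSpace ℂ E] [CompleteSpace E]

theorem inner_neg_I_smul_add_inner_neg_I_smul {A B : E →L[ℂ] E} (hA : IsSelfAdjoint A)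
    (u v : E) : ⟪u, -I • B v⟫_ℂ + ⟪-I • A u, v⟫_ℂ = I * ⟪u, (A - B) v⟫_ℂ := by
  have hAuv : ⟪A u, v⟫_ℂ = ⟪u, A v⟫_ℂ := hA.isSymmetric u v
  rw [inner_smul_right, inner_smul_left, hAuv, _root_.sub_apply, inner_sub_right]
  simp only [map_neg, conj_I, neg_neg]
  ring

variable [NormedSpace ℝ E]

theorem HasDerivAt.inner_of_schrodinger {A B : E →L[ℂ] E} (hA : IsSelfAdjoint A)
    {u v : ℝ → E} {t : ℝ} (hu : HasDerivAt u (-I • A (u t)) t)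
    (hv : HasDerivAt v (-I • B (v t)) t) :
    HasDerivAt (fun s ↦ ⟪u s, v s⟫_ℂ) (I * ⟪u t, (A - B) (v t)⟫_ℂ) t := by
  simpa only [inner_neg_I_smul_add_inner_neg_I_smul hA] using hu.inner ℂ hv

theorem norm_eq_norm_zero_of_schrodinger {A : ℝ → E →L[ℂ] E} (hA : ∀ t, IsSelfAdjoint (A t))
    {u : ℝ → E} {T : ℝ} (hu : ∀ t ∈ Icc 0 T, HasDerivAt u (-I • A t (u t)) t)
    {t : ℝ} (ht : t ∈ Icc 0 T) : ‖u t‖ = ‖u 0‖ := by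
  have hderiv : ∀ s ∈ Icc 0 T, HasDerivAt (fun s ↦ ⟪u s, u s⟫_ℂ) 0 s := fun s hs ↦ by
    simpa using (hu s hs).inner_of_schrodinger (hA s) (hu s hs)
  have hconst := constant_of_has_deriv_right_zero
    (fun s hs ↦ (hderiv s hs).continuousAt.continuousWithinAt)
    (fun s hs ↦ (hderiv s (Ico_subset_Icc_self hs)).hasDerivWithinAt) t ht
  simp only [inner_self_eq_norm_sq_to_K] at hconst
  exact (pow_left_inj₀ (norm_nonneg _) (norm_nonneg _) two_ne_zero).1 (by exact_mod_cast hconst)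

end Schrodinger

section Scrambled

variable {ι : Type*} [DecidableEq ι]

def scrambledHamiltonian (H : Matrix ι ι ℂ) (c : ℝ) (h : ι → ℝ) (π : Perm ι) : Matrix ι ι ℂ :=
  H + (c : ℂ) • diagonal fun z ↦ (h (π.symm z) : ℂ)

variable {H : Matrix ι ι ℂ} {c : ℝ} {h : ι → ℝ}

theorem Matrix.IsHermitian.scrambledHamiltonian (hH : H.IsHermitian) (π : Perm ι) :
    (scrambledHamiltonian H c h π).IsHermitian :=
  hH.add ((isHermitian_diagonal_iff.2 fun _ ↦ conj_ofReal _).smul (conj_ofReal c))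

variable [Fintype ι]

theorem inner_toEuclideanCLM_diagonal (g : ι → ℂ) (u v : EuclideanSpace ℂ ι) :
    ⟪u, toEuclideanCLM (𝕜 := ℂ) (diagonal g) v⟫_ℂ = ∑ z, conj (u z) * g z * v z := by
  simp only [PiLp.inner_apply, ofLp_toEuclideanCLM, mulVec_diagonal, RCLike.inner_apply]
  exact sum_congr rfl fun z _ ↦ by ring

theorem norm_inner_diagonal_swap_le (h : ι → ℝ) (π : Perm ι) (a b : ι)
    {u v : EuclideanSpace ℂ ι} (hu : ‖u‖ ≤ 1) (hv : ‖v‖ ≤ 1) :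
    ‖⟪u, toEuclideanCLM (𝕜 := ℂ)
        (diagonal fun z ↦ ((h (π.symm z) - h (swap a b (π.symm z)) : ℝ) : ℂ)) v⟫_ℂ‖
      ≤ |h a - h b| * (‖v (π a)‖ + ‖u (π b)‖) := by
  rcases eq_or_ne a b with rfl | hab
  · simp
  set f : ι → ℂ := fun y ↦ conj (u (π y)) * ((h y - h (swap a b y) : ℝ) : ℂ) * v (π y)
  have hsum : ⟪u, toEuclideanCLM (𝕜 := ℂ)
      (diagonal fun z ↦ ((h (π.symm z) - h (swap a b (π.symm z)) : ℝ) : ℂ)) v⟫_ℂ = ∑ y, f y := by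
    rw [inner_toEuclideanCLM_diagonal, ← Equiv.sum_comp π]
    simp [f]
  have hua : ‖u (π a)‖ ≤ 1 := (PiLp.norm_apply_le u _).trans hu
  have hvb : ‖v (π b)‖ ≤ 1 := (PiLp.norm_apply_le v _).trans hv
  rw [hsum, Fintype.sum_eq_add a b hab fun y hy ↦ by simp [f, swap_apply_of_ne_of_ne hy.1 hy.2]]
  calc ‖f a + f b‖ ≤ ‖f a‖ + ‖f b‖ := norm_add_le _ _
    _ = |h a - h b| * (‖u (π a)‖ * ‖v (π a)‖ + ‖u (π b)‖ * ‖v (π b)‖) := by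
      simp only [f, norm_mul, RCLike.norm_conj, norm_real, Real.norm_eq_abs, swap_apply_left,
        swap_apply_right, abs_sub_comm (h b)]
      ring
    _ ≤ |h a - h b| * (‖v (π a)‖ + ‖u (π b)‖) := by
      gcongr
      · exact mul_le_of_le_one_left (norm_nonneg _) hua
      · exact mul_le_of_le_one_right (norm_nonneg _) hvb

theorem norm_inner_scrambledHamiltonian_sub_le (hc : |c| ≤ 1) (π : Perm ι) (a b : ι)
    {u v : EuclideanSpace ℂ ι} (hu : ‖u‖ ≤ 1) (hv : ‖v‖ ≤ 1) :
    ‖⟪u, toEuclideanCLM (𝕜 := ℂ) (scrambledHamiltonian H c h π -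
        scrambledHamiltonian H c h (π * swap a b)) v⟫_ℂ‖
      ≤ |h a - h b| * (‖v (π a)‖ + ‖u (π b)‖) := by
  have hdiff : scrambledHamiltonian H c h π - scrambledHamiltonian H c h (π * swap a b) =
      (c : ℂ) • diagonal fun z ↦ ((h (π.symm z) - h (swap a b (π.symm z)) : ℝ) : ℂ) := by
    ext i j
    rcases eq_or_ne i j with rfl | hij
    · simp [scrambledHamiltonian, mul_sub, Perm.mul_def]
    · simp [scrambledHamiltonian, hij]
  rw [hdiff, map_smul, _root_.smul_apply, inner_smul_right, norm_mul, norm_real,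
    Real.norm_eq_abs]
  exact (mul_le_of_le_one_left (norm_nonneg _) hc).trans (norm_inner_diagonal_swap_le h π a b hu hv)

end Scrambled

section SwapOverlap

variable {ι : Type*} [Fintype ι]

theorem sum_norm_sq_comp_perm (x : EuclideanSpace ℂ ι) (π : Perm ι) :
    ∑ z, ‖x (π z)‖ ^ 2 = ‖x‖ ^ 2 := by
  rw [EuclideanSpace.norm_sq_eq]
  exact Equiv.sum_comp π fun z ↦ ‖x z‖ ^ 2

theorem sum_abs_mul_norm_comp_perm_le (g : ι → ℝ) (x : EuclideanSpace ℂ ι) (π : Perm ι) :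
    ∑ z, |g z| * ‖x (π z)‖ ≤ √(∑ z, g z ^ 2) * ‖x‖ := by
  calc ∑ z, |g z| * ‖x (π z)‖ ≤ √(∑ z, |g z| ^ 2) * √(∑ z, ‖x (π z)‖ ^ 2) :=
        Real.sum_mul_le_sqrt_mul_sqrt _ _ _
    _ = √(∑ z, g z ^ 2) * ‖x‖ := by
      simp only [sq_abs, sum_norm_sq_comp_perm, Real.sqrt_sq (norm_nonneg x)]

theorem sq_norm_apply_le (u v : EuclideanSpace ℂ ι) (z : ι) :
    ‖u z‖ ^ 2 ≤ 2 * ‖u - v‖ ^ 2 + 2 * ‖v z‖ ^ 2 := by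
  have h : ‖u z‖ ≤ ‖u - v‖ + ‖v z‖ := by
    calc ‖u z‖ ≤ ‖u z - v z‖ + ‖v z‖ := norm_le_norm_sub_add _ _
      _ ≤ ‖u - v‖ + ‖v z‖ := by gcongr; exact PiLp.norm_apply_le (u - v) z
  nlinarith [norm_nonneg (u z), sq_nonneg (‖u - v‖ - ‖v z‖)]

theorem re_inner_le_of_norm_eq_one {u v : EuclideanSpace ℂ ι} (hu : ‖u‖ = 1) (hv : ‖v‖ = 1)
    (z : ι) : re ⟪u, v⟫_ℂ ≤ 1 - ‖u z‖ ^ 2 / 4 + ‖v z‖ ^ 2 / 2 := by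
  have h := sq_norm_apply_le u v z
  rw [norm_sub_sq (𝕜 := ℂ), hu, hv] at h
  simp only [RCLike.re_to_complex] at h
  linarith

variable [DecidableEq ι]

noncomputable def swapOverlap (a : ι) (x : Perm ι → EuclideanSpace ℂ ι) : ℝ :=
  ∑ b, ∑ π, re ⟪x π, x (π * swap a b)⟫_ℂ

theorem swapOverlap_const (a : ι) (y : EuclideanSpace ℂ ι) :
    swapOverlap a (fun _ ↦ y) = Fintype.card ι * Fintype.card (Perm ι) * ‖y‖ ^ 2 := by
  simp only [swapOverlap, ← RCLike.re_to_complex, inner_self_eq_norm_sq, sum_const, card_univ,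
    nsmul_eq_mul]
  ring

theorem swapOverlap_le (a : ι) {x : Perm ι → EuclideanSpace ℂ ι} (hx : ∀ π, ‖x π‖ = 1) :
    swapOverlap a x ≤ Fintype.card ι * Fintype.card (Perm ι) + Fintype.card (Perm ι) / 2
      - Fintype.card ι / 4 * ∑ π, ‖x π (π a)‖ ^ 2 := by
  have hreindex : ∀ b, ∑ π, ‖x (π * swap a b) (π a)‖ ^ 2 = ∑ π, ‖x π (π b)‖ ^ 2 := fun b ↦ by
    simpa using Equiv.sum_comp (Equiv.mulRight (swap a b)) fun σ ↦ ‖x σ (σ b)‖ ^ 2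
  have hcollect : ∑ b, ∑ π, ‖x π (π b)‖ ^ 2 = Fintype.card (Perm ι) := by
    simp [sum_comm (γ := ι), sum_norm_sq_comp_perm, hx]
  calc swapOverlap a x
      ≤ ∑ b, ∑ π, (1 - ‖x π (π a)‖ ^ 2 / 4 + ‖x (π * swap a b) (π a)‖ ^ 2 / 2) :=
        sum_le_sum fun b _ ↦ sum_le_sum fun π _ ↦ re_inner_le_of_norm_eq_one (hx _) (hx _) _
    _ = _ := by
      simp only [sum_add_distrib, sum_sub_distrib, ← sum_div, hreindex, hcollect, sum_const,
        card_univ, nsmul_eq_mul]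
      ring

theorem abs_sum_re_I_mul_inner_scrambledHamiltonian_sub_le {H : Matrix ι ι ℂ} {c : ℝ}
    (hc : |c| ≤ 1) {h : ι → ℝ} {a : ι} (ha : h a = 0) {x : Perm ι → EuclideanSpace ℂ ι}
    (hx : ∀ π, ‖x π‖ = 1) :
    |∑ b, ∑ π, re (I * ⟪x π, toEuclideanCLM (𝕜 := ℂ) (scrambledHamiltonian H c h π -
        scrambledHamiltonian H c h (π * swap a b)) (x (π * swap a b))⟫_ℂ)|
      ≤ 2 * Fintype.card (Perm ι) * √(∑ z, h z ^ 2) := by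
  have hreindex : ∀ b, ∑ π, |h b| * ‖x (π * swap a b) (π a)‖ = ∑ π, |h b| * ‖x π (π b)‖ :=
    fun b ↦ by simpa using Equiv.sum_comp (Equiv.mulRight (swap a b)) fun σ ↦ |h b| * ‖x σ (σ b)‖
  calc _ ≤ ∑ b, ∑ π, |h b| * (‖x (π * swap a b) (π a)‖ + ‖x π (π b)‖) := by
        refine (abs_sum_le_sum_abs _ _).trans <| sum_le_sum fun b _ ↦
          (abs_sum_le_sum_abs _ _).trans <| sum_le_sum fun π _ ↦ ?_
        grw [abs_re_le_norm, norm_mul, norm_I, one_mul,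
          norm_inner_scrambledHamiltonian_sub_le hc π a b (hx _).le (hx _).le, ha, zero_sub,
          abs_neg]
    _ = 2 * ∑ π, ∑ b, |h b| * ‖x π (π b)‖ := by
      simp only [mul_add, sum_add_distrib, hreindex]
      rw [← two_mul, sum_comm]
    _ ≤ 2 * ∑ _π : Perm ι, √(∑ z, h z ^ 2) := by
      gcongr with π
      simpa [hx] using sum_abs_mul_norm_comp_perm_le h (x π) π
    _ = 2 * Fintype.card (Perm ι) * √(∑ z, h z ^ 2) := by
      rw [sum_const, card_univ, nsmul_eq_mul, mul_assoc]

theorem hasDerivAt_swapOverlap (a : ι) {H : Perm ι → Matrix ι ι ℂ}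
    (hH : ∀ π, (H π).IsHermitian) {ψ : Perm ι → ℝ → EuclideanSpace ℂ ι} {t : ℝ}
    (hψ : ∀ π, HasDerivAt (ψ π) (-I • toEuclideanCLM (𝕜 := ℂ) (H π) (ψ π t)) t) :
    HasDerivAt (fun s ↦ swapOverlap a fun π ↦ ψ π s)
      (∑ b, ∑ π, re (I * ⟪ψ π t, toEuclideanCLM (𝕜 := ℂ) (H π - H (π * swap a b))
        (ψ (π * swap a b) t)⟫_ℂ)) t := by
  refine HasDerivAt.fun_sum fun b _ ↦ HasDerivAt.fun_sum fun π _ ↦ ?_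
  have hinner := (hψ π).inner_of_schrodinger ((hH π).isSelfAdjoint.map _) (hψ (π * swap a b))
  rw [← map_sub] at hinner
  exact reCLM.hasFDerivAt.comp_hasDerivAt t hinner

theorem swapOverlap_sub_le (a : ι) {HD : ℝ → Matrix ι ι ℂ} (hHD : ∀ t, (HD t).IsHermitian)
    {c : ℝ → ℝ} (hc : ∀ t, |c t| ≤ 1) {h : ι → ℝ} (ha : h a = 0)
    {ψ : Perm ι → ℝ → EuclideanSpace ℂ ι} {T : ℝ} (hT : 0 ≤ T)
    (hψ : ∀ π, ∀ t ∈ Icc 0 T, HasDerivAt (ψ π)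
      (-I • toEuclideanCLM (𝕜 := ℂ) (scrambledHamiltonian (HD t) (c t) h π) (ψ π t)) t)
    (hunit : ∀ π, ∀ t ∈ Icc 0 T, ‖ψ π t‖ = 1) :
    swapOverlap a (fun π ↦ ψ π 0) - swapOverlap a (fun π ↦ ψ π T)
      ≤ 2 * Fintype.card (Perm ι) * √(∑ z, h z ^ 2) * T := by
  have hmvt := norm_image_sub_le_of_norm_deriv_le_segment'
    (fun t ht ↦ (hasDerivAt_swapOverlap a (fun π ↦ (hHD t).scrambledHamiltonian π)
      fun π ↦ hψ π t ht).hasDerivWithinAt)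
    (fun t ht ↦ abs_sum_re_I_mul_inner_scrambledHamiltonian_sub_le (hc t) ha
      fun π ↦ hunit π t (Ico_subset_Icc_self ht)) T ⟨hT, le_rfl⟩
  rw [Real.norm_eq_abs, sub_zero, abs_sub_comm] at hmvt
  exact (le_abs_self _).trans hmvt

end SwapOverlap

theorem card_filter_mul_le_sum {α : Type*} [Fintype α] (f : α → ℝ) (hf : ∀ x, 0 ≤ f x)
    (r : ℝ) : #{x | r ≤ f x} * r ≤ ∑ x, f x := by
  calc #{x | r ≤ f x} * r = #{x | r ≤ f x} • r := (nsmul_eq_mul _ _).symm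
    _ ≤ ∑ x ∈ {x | r ≤ f x}, f x := card_nsmul_le_sum _ _ _ fun x hx ↦ (mem_filter.1 hx).2
    _ ≤ ∑ x, f x := sum_le_sum_of_subset_of_nonneg (filter_subset _ _) fun x _ _ ↦ hf x

theorem sq_mul_sqrt_div_le_of_sub_le {n ε S T : ℝ} (hn : 1 < n) (hε : ε ≤ 1) (hεn : 256 ≤ ε * n)
    (hT : 0 ≤ T) (hkey : ε * n - 4 ≤ 16 * √S * T) :
    ε ^ 2 * √n / (64 * √(S / (n - 1))) ≤ T := by
  have hn1 : 0 < √(n - 1) := Real.sqrt_pos.2 (by linarith)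
  have hε0 : 0 < ε := by nlinarith
  have hsqrt : √n * √(n - 1) ≤ n := by
    rw [← Real.sqrt_mul (by linarith)]
    calc √(n * (n - 1)) ≤ √(n ^ 2) := Real.sqrt_le_sqrt (by nlinarith)
      _ = n := Real.sqrt_sq (by linarith)
  refine div_le_of_le_mul₀ (by positivity) hT ?_
  calc ε ^ 2 * √n = ε ^ 2 * (√n * √(n - 1)) / √(n - 1) := by field_simp
    _ ≤ 4 * (ε * n - 4) / √(n - 1) := by
      gcongr ?_ / _
      nlinarith [mul_le_mul_of_nonneg_left hsqrt (sq_nonneg ε)]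
    _ ≤ 4 * (16 * √S * T) / √(n - 1) := by gcongr
    _ = T * (64 * √(S / (n - 1))) := by rw [Real.sqrt_div' _ (by linarith)]; ring

/-- Scrambled cost-function lower bound: no continuous-time Hamiltonian evolution with a
π-independent driver can find the minimum of a scrambled cost function for an `ε`
fraction of all permutations in time less than `ε²√N/(64 h*)`. -/
theorem stmt19 (N : ℕ) (hN2 : 2 ≤ N)
    (h : Fin N → ℝ) (h0 : h ⟨0, by omega⟩ = 0)
    (HD : ℝ → Matrix (Fin N) (Fin N) ℂ)
    (hHDherm : ∀ t, (HD t).IsHermitian)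
    (c : ℝ → ℝ) (hc : ∀ t, |c t| ≤ 1)
    (ψ₀ : EuclideanSpace ℂ (Fin N)) (hψ₀ : ‖ψ₀‖ = 1)
    (T : ℝ) (hT : 0 < T)
    (ψ : Equiv.Perm (Fin N) → ℝ → EuclideanSpace ℂ (Fin N))
    (hstart : ∀ π, ψ π 0 = ψ₀)
    (hSch : ∀ π : Equiv.Perm (Fin N), ∀ t ∈ Set.Icc (0 : ℝ) T,
      HasDerivAt (ψ π)
        (-Complex.I • (Matrix.toEuclideanCLM (𝕜 := ℂ)
          (HD t + (c t : ℂ) • Matrix.diagonal fun z => (h (π.symm z) : ℂ)) (ψ π t))) t)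
    (ε : ℝ) (hε0 : 0 < ε) (hε1 : ε ≤ 1) (hNε : 256 / ε ≤ (N : ℝ))
    (hsuccess : ε * (Nat.factorial N) ≤
      ((Finset.univ.filter fun π : Equiv.Perm (Fin N) =>
        (1 / 2 : ℝ) ≤ ‖(inner ℂ (EuclideanSpace.single (π ⟨0, by omega⟩) (1 : ℂ)) (ψ π T) : ℂ)‖ ^ 2).card : ℝ)) :
    ε ^ 2 * Real.sqrt N / (64 * Real.sqrt ((∑ z, h z ^ 2) / ((N : ℝ) - 1))) ≤ T := by
  set z₀ : Fin N := ⟨0, by omega⟩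
  have hT₀ : T ∈ Icc 0 T := ⟨hT.le, le_rfl⟩
  have hunit : ∀ π, ∀ t ∈ Icc 0 T, ‖ψ π t‖ = 1 := fun π t ht ↦ by
    rw [norm_eq_norm_zero_of_schrodinger
      (fun s ↦ ((hHDherm s).scrambledHamiltonian π).isSelfAdjoint.map _) (hSch π) ht, hstart, hψ₀]
  have hdrop := swapOverlap_sub_le z₀ hHDherm hc h0 hT.le hSch hunit
  have hinit : swapOverlap z₀ (fun π ↦ ψ π 0) = N * N.factorial := by
    simp [hstart, swapOverlap_const, hψ₀, Fintype.card_perm]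
  have hfinal := swapOverlap_le z₀ fun π ↦ hunit π T hT₀
  have hfound : ε * N.factorial / 2 ≤ ∑ π, ‖ψ π T (π z₀)‖ ^ 2 := by
    have hmarkov := card_filter_mul_le_sum
      (fun π ↦ ‖⟪EuclideanSpace.single (π z₀) (1 : ℂ), ψ π T⟫_ℂ‖ ^ 2) (fun _ ↦ by positivity) (1 / 2)
    simp only [EuclideanSpace.inner_single_left, map_one, one_mul] at hmarkov hsuccess
    linarith
  have hkey : ε * N - 4 ≤ 16 * √(∑ z, h z ^ 2) * T := by
    rw [Fintype.card_perm, Fintype.card_fin] at hdrop hfinal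
    have hfac : (0 : ℝ) < N.factorial := by positivity
    refine le_of_mul_le_mul_right ?_ hfac
    nlinarith [mul_le_mul_of_nonneg_left hfound (Nat.cast_nonneg N : (0 : ℝ) ≤ N)]
  exact sq_mul_sqrt_div_le_of_sub_le (by exact_mod_cast hN2) hε1
    (by rwa [div_le_iff₀ hε0, mul_comm] at hNε) hT.le hkey
end
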